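/- arXiv:2403.07993 — 8 statements merged into one kernel-verified Lean document; each statement's English description precedes it below -/
import Mathlib

section
/- Let n ≥ 1 and let a, b be Hermitian matrices in M_n(ℂ), with eigenvalues listed with multiplicity as α_1, …, α_n and β_1, …, β_n (e.g. via the spectral theorem for Hermitian matrices). Then the unitary distance equals the optimal matching distance: inf_{u ∈ U(n)} ‖a − u b u*‖ = min_{σ ∈ S_n} max_{1 ≤ i ≤ n} |α_i − β_{σ(i)}|, where ‖·‖ denotes the ℓ²-operator norm on M_n(ℂ), U(n) is the group of n×n complex unitary matrices, and S_n is the group of permutations of {1, …, n}. -/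
/-!
For a permutation `σ`, conjugating `b` by `u = V_a P_σ V_b⋆` (eigenvector unitaries and a
permutation matrix) turns `a - u b u⋆` into `V_a diag(α - β ∘ σ) V_a⋆`, of norm
`maxᵢ |αᵢ - β_{σ i}|`; this gives `≤`.

Conversely, `u b u⋆` has the same eigenvalues as `b`, so it suffices to bound the matching
distance of two Hermitian operators `S`, `T` by `‖S - T‖` (Weyl's perturbation inequality).
Sort both spectra increasingly. For each `k`, the eigenvectors of `S` with index
`≥ k` and those of `T` with index `≤ k` span subspaces of dimensions `n - k` and `k + 1`, which
therefore share a nonzero vector `x`; on it `αₖ ‖x‖² ≤ re ⟪x, S x⟫` and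
`re ⟪x, T x⟫ ≤ βₖ ‖x‖²`, whence `αₖ - βₖ ≤ ‖S - T‖`.
-/

open Module Submodule
open scoped InnerProductSpace

section WeylInequality

variable {𝕜 E : Type*} [RCLike 𝕜] [NormedAddCommGroup E] [InnerProductSpace 𝕜 E]

theorem Orthonormal.mul_norm_sq_le_re_inner_apply {ι : Type*} [Fintype ι] {f : ι → E}
    (hf : Orthonormal 𝕜 f) {T : E →ₗ[𝕜] E} {c : ι → ℝ} (hT : ∀ i, T (f i) = (c i : 𝕜) • f i)
    {r : ℝ} (hr : ∀ i, r ≤ c i) {x : E} (hx : x ∈ span 𝕜 (Set.range f)) :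
    r * ‖x‖ ^ 2 ≤ RCLike.re ⟪x, T x⟫_𝕜 := by
  obtain ⟨l, rfl⟩ := (mem_span_range_iff_exists_fun 𝕜).mp hx
  have hTx : T (∑ i, l i • f i) = ∑ i, (l i * c i) • f i := by
    simp only [map_sum, map_smul, hT, smul_smul]
  rw [hTx, norm_sq_eq_re_inner (𝕜 := 𝕜), hf.inner_sum, hf.inner_sum, map_sum, map_sum,
    Finset.mul_sum]
  gcongr with i
  rw [← mul_assoc, RCLike.conj_mul, ← RCLike.ofReal_pow, ← RCLike.ofReal_mul, RCLike.ofReal_re,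
    RCLike.ofReal_re, mul_comm]
  exact mul_le_mul_of_nonneg_left (hr i) (sq_nonneg _)

theorem Submodule.exists_mem_inf_ne_zero_of_finrank_lt [FiniteDimensional 𝕜 E]
    {s t : Submodule 𝕜 E} (h : finrank 𝕜 E < finrank 𝕜 s + finrank 𝕜 t) :
    ∃ x ∈ s ⊓ t, x ≠ 0 :=
  exists_mem_ne_zero_of_ne_bot fun hst ↦ h.not_ge <|
    finrank_add_finrank_le_of_disjoint (disjoint_iff.mpr hst)

variable [FiniteDimensional 𝕜 E] {n : ℕ} {S T : E →L[𝕜] E} {v w : Fin n → E} {α β : Fin n → ℝ}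

theorem sub_le_opNorm_sub_of_orthonormal_eigenvectors (hE : finrank 𝕜 E = n)
    (hv : Orthonormal 𝕜 v) (hw : Orthonormal 𝕜 w) (hα : Monotone α) (hβ : Monotone β)
    (hS : ∀ i, S (v i) = (α i : 𝕜) • v i) (hT : ∀ i, T (w i) = (β i : 𝕜) • w i) (k : Fin n) :
    α k - β k ≤ ‖S - T‖ := by
  let v' : Set.Ici k → E := fun i ↦ v i
  let w' : Set.Iic k → E := fun i ↦ w i
  have hv' : Orthonormal 𝕜 v' := hv.comp _ Subtype.val_injective
  have hw' : Orthonormal 𝕜 w' := hw.comp _ Subtype.val_injective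
  obtain ⟨x, ⟨hxv, hxw⟩, hx⟩ : ∃ x ∈ span 𝕜 (Set.range v') ⊓ span 𝕜 (Set.range w'), x ≠ 0 := by
    apply exists_mem_inf_ne_zero_of_finrank_lt
    rw [finrank_span_eq_card hv'.linearIndependent, finrank_span_eq_card hw'.linearIndependent,
      Fintype.card_Ici, Fintype.card_Iic, Fin.card_Ici, Fin.card_Iic, hE]
    omega
  have hSx : α k * ‖x‖ ^ 2 ≤ RCLike.re ⟪x, S x⟫_𝕜 :=
    hv'.mul_norm_sq_le_re_inner_apply (T := S) (fun i ↦ hS i) (fun i ↦ hα i.2) hxv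
  have hTx : -β k * ‖x‖ ^ 2 ≤ RCLike.re ⟪x, -T x⟫_𝕜 :=
    hw'.mul_norm_sq_le_re_inner_apply (T := -T) (c := fun i ↦ -β i)
      (fun i ↦ by simp [w', hT]) (fun i ↦ neg_le_neg (hβ i.2)) hxw
  have hSTx : RCLike.re ⟪x, (S - T) x⟫_𝕜 ≤ ‖S - T‖ * ‖x‖ ^ 2 := calc
    _ ≤ ‖x‖ * ‖(S - T) x‖ := re_inner_le_norm _ _
    _ ≤ ‖x‖ * (‖S - T‖ * ‖x‖) := by gcongr; exact (S - T).le_opNorm x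
    _ = ‖S - T‖ * ‖x‖ ^ 2 := by ring
  have hx2 : 0 < ‖x‖ ^ 2 := by positivity
  rw [sub_apply, sub_eq_add_neg, inner_add_right, map_add] at hSTx
  exact le_of_mul_le_mul_right (by linarith) hx2

theorem abs_sub_le_opNorm_sub_of_orthonormal_eigenvectors (hE : finrank 𝕜 E = n)
    (hv : Orthonormal 𝕜 v) (hw : Orthonormal 𝕜 w) (hα : Monotone α) (hβ : Monotone β)
    (hS : ∀ i, S (v i) = (α i : 𝕜) • v i) (hT : ∀ i, T (w i) = (β i : 𝕜) • w i) (k : Fin n) :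
    |α k - β k| ≤ ‖S - T‖ :=
  abs_sub_le_iff.mpr
    ⟨sub_le_opNorm_sub_of_orthonormal_eigenvectors hE hv hw hα hβ hS hT k,
      norm_sub_rev S T ▸ sub_le_opNorm_sub_of_orthonormal_eigenvectors hE hw hv hβ hα hT hS k⟩

end WeylInequality

namespace Matrix

theorem permMatrix_mem_unitaryGroup {n R : Type*} [Fintype n] [DecidableEq n] [CommRing R]
    [StarRing R] (σ : Equiv.Perm n) : σ.permMatrix R ∈ unitaryGroup n R := by
  rw [mem_unitaryGroup_iff, star_eq_conjTranspose, conjTranspose_permMatrix, ← permMatrix_mul,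
    inv_mul_cancel, permMatrix_one]

theorem permMatrix_mul_diagonal_mul_permMatrix_inv {n R : Type*} [Fintype n] [DecidableEq n]
    [CommRing R] (σ : Equiv.Perm n) (d : n → R) :
    σ.permMatrix R * diagonal d * σ⁻¹.permMatrix R = diagonal (d ∘ σ) := by
  rw [PEquiv.toMatrix_toPEquiv_mul, PEquiv.mul_toMatrix_toPEquiv, Equiv.Perm.inv_def,
    Equiv.symm_symm, submatrix_submatrix, Function.id_comp, Function.comp_id,
    submatrix_diagonal_equiv]

variable {𝕜 : Type*} [RCLike 𝕜]

open scoped Matrix.Norms.L2Operator in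
theorem norm_toEuclideanCLM_unitary_mul_diagonal_mul_star {n : Type*} [Fintype n]
    [DecidableEq n] (V : unitaryGroup n 𝕜) (d : n → ℝ) :
    ‖toEuclideanCLM (𝕜 := 𝕜)
        ((V : Matrix n n 𝕜) * diagonal (fun i ↦ (d i : 𝕜)) * star (V : Matrix n n 𝕜))‖ =
      ⨆ i, |d i| := by
  rw [l2_opNorm_toEuclideanCLM, ← Unitary.coe_star, CStarRing.norm_mul_coe_unitary,
    CStarRing.norm_coe_unitary_mul, l2_opNorm_diagonal, Pi.norm_def, Finset.sup_univ_eq_ciSup,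
    NNReal.coe_iSup]
  simp only [coe_nnnorm, RCLike.norm_ofReal]

namespace IsHermitian

section

variable {n : Type*} [Fintype n] [DecidableEq n]

theorem toEuclideanCLM_eigenvectorBasis {A : Matrix n n 𝕜} (hA : A.IsHermitian) (i : n) :
    toEuclideanCLM (𝕜 := 𝕜) A (hA.eigenvectorBasis i) =
      (hA.eigenvalues i : 𝕜) • hA.eigenvectorBasis i := by
  apply WithLp.ofLp_injective 2
  simpa only [ofLp_toEuclideanCLM, WithLp.ofLp_smul, ← RCLike.real_smul_eq_coe_smul]
    using hA.mulVec_eigenvectorBasis i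

theorem eigenvalues_unitary_conj {B : Matrix n n 𝕜} (hB : B.IsHermitian) (u : unitaryGroup n 𝕜)
    (hu : ((u : Matrix n n 𝕜) * B * star (u : Matrix n n 𝕜)).IsHermitian) :
    hu.eigenvalues = hB.eigenvalues := by
  rw [eigenvalues_eq_eigenvalues_iff, charpoly_mul_comm, ← mul_assoc, Unitary.coe_star_mul_self,
    one_mul]

theorem exists_unitary_sub_conj_eq {A B : Matrix n n 𝕜} (hA : A.IsHermitian)
    (hB : B.IsHermitian) (σ : Equiv.Perm n) :
    ∃ u : unitaryGroup n 𝕜, A - (u : Matrix n n 𝕜) * B * star (u : Matrix n n 𝕜) =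
      hA.eigenvectorUnitary *
        diagonal (fun i ↦ ((hA.eigenvalues i - hB.eigenvalues (σ i) : ℝ) : 𝕜)) *
        star (hA.eigenvectorUnitary : Matrix n n 𝕜) := by
  set V : Matrix n n 𝕜 := (hA.eigenvectorUnitary : Matrix n n 𝕜)
  set W : Matrix n n 𝕜 := (hB.eigenvectorUnitary : Matrix n n 𝕜)
  set P : Matrix n n 𝕜 := σ.permMatrix 𝕜
  have hA' : A = V * diagonal (RCLike.ofReal ∘ hA.eigenvalues) * star V := hA.spectral_theorem
  have hB' : star W * B * W = diagonal (RCLike.ofReal ∘ hB.eigenvalues) := by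
    rw [← Unitary.conjStarAlgAut_star_apply (S := 𝕜), hB.conjStarAlgAut_star_eigenvectorUnitary]
  have hP : P * diagonal (RCLike.ofReal ∘ hB.eigenvalues) * star P =
      diagonal (RCLike.ofReal ∘ hB.eigenvalues ∘ σ) := by
    rw [star_eq_conjTranspose, conjTranspose_permMatrix,
      permMatrix_mul_diagonal_mul_permMatrix_inv]
    rfl
  refine ⟨⟨V * P * star W, mul_mem (mul_mem hA.eigenvectorUnitary.2
    (permMatrix_mem_unitaryGroup σ)) (Unitary.star_mem hB.eigenvectorUnitary.2)⟩, ?_⟩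
  -- only the first `A`: the others occur inside `hA.eigenvalues`
  nth_rw 1 [hA']
  calc _ = V * (diagonal (RCLike.ofReal ∘ hA.eigenvalues) - P * (star W * B * W) * star P) *
        star V := by
        simp only [star_mul, star_star]
        noncomm_ring
    _ = _ := by
        rw [hB', hP, diagonal_sub]
        congr 3 with i
        simp

end

theorem iInf_iSup_abs_eigenvalues_sub_le {n : ℕ} {A B : Matrix (Fin n) (Fin n) 𝕜}
    (hA : A.IsHermitian) (hB : B.IsHermitian) :
    ⨅ σ : Equiv.Perm (Fin n), ⨆ i, |hA.eigenvalues i - hB.eigenvalues (σ i)| ≤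
      ‖toEuclideanCLM (𝕜 := 𝕜) (A - B)‖ := by
  set p := Tuple.sort hA.eigenvalues
  set q := Tuple.sort hB.eigenvalues
  have hbdd : BddBelow (Set.range fun σ : Equiv.Perm (Fin n) ↦
      ⨆ i, |hA.eigenvalues i - hB.eigenvalues (σ i)|) :=
    ⟨0, Set.forall_mem_range.2 fun _ ↦ Real.iSup_nonneg fun _ ↦ abs_nonneg _⟩
  calc _ ≤ ⨆ i, |hA.eigenvalues i - hB.eigenvalues ((q * p⁻¹) i)| := ciInf_le hbdd _
    _ = ⨆ j, |hA.eigenvalues (p j) - hB.eigenvalues (q j)| := by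
      rw [← p.iSup_comp]
      simp [Equiv.Perm.mul_apply]
    _ ≤ _ := by
      refine Real.iSup_le (fun j ↦ ?_) (norm_nonneg _)
      rw [map_sub]
      exact abs_sub_le_opNorm_sub_of_orthonormal_eigenvectors (S := toEuclideanCLM (𝕜 := 𝕜) A)
        (T := toEuclideanCLM (𝕜 := 𝕜) B) (α := hA.eigenvalues ∘ p) (β := hB.eigenvalues ∘ q)
        finrank_euclideanSpace_fin
        (hA.eigenvectorBasis.orthonormal.comp p p.injective)
        (hB.eigenvectorBasis.orthonormal.comp q q.injective)
        (Tuple.monotone_sort _) (Tuple.monotone_sort _)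
        (fun i ↦ hA.toEuclideanCLM_eigenvectorBasis (p i))
        (fun i ↦ hB.toEuclideanCLM_eigenvectorBasis (q i)) j

end IsHermitian

end Matrix

theorem weyl_unitary_distance_eq_optimal_matching_general
    (n : ℕ) (a b : Matrix (Fin n) (Fin n) ℂ)
    (ha : a.IsHermitian) (hb : b.IsHermitian) :
    (⨅ u : Matrix.unitaryGroup (Fin n) ℂ,
        ‖Matrix.toEuclideanCLM (𝕜 := ℂ)
          (a - (u : Matrix (Fin n) (Fin n) ℂ) * b * star (u : Matrix (Fin n) (Fin n) ℂ))‖)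
      = ⨅ σ : Equiv.Perm (Fin n), ⨆ i : Fin n, |ha.eigenvalues i - hb.eigenvalues (σ i)| := by
  refine le_antisymm (le_ciInf fun σ ↦ ?_) (le_ciInf fun u ↦ ?_)
  · obtain ⟨u, hu⟩ := ha.exists_unitary_sub_conj_eq hb σ
    refine ciInf_le_of_le ⟨0, Set.forall_mem_range.2 fun _ ↦ norm_nonneg _⟩ u ?_
    rw [hu, Matrix.norm_toEuclideanCLM_unitary_mul_diagonal_mul_star]
  · have hub :
        ((u : Matrix (Fin n) (Fin n) ℂ) * b * star (u : Matrix (Fin n) (Fin n) ℂ)).IsHermitian :=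
      Matrix.isHermitian_mul_mul_conjTranspose _ hb
    simpa only [hb.eigenvalues_unitary_conj u hub] using ha.iInf_iSup_abs_eigenvalues_sub_le hub

/-- Weyl's theorem: for Hermitian matrices `a, b ∈ Mₙ(ℂ)`, the unitary distance
`inf_{u ∈ U(n)} ‖a − u b u*‖` (ℓ²-operator norm) equals the optimal matching distance
`min_{σ ∈ Sₙ} max_i |α_i − β_{σ(i)}|` between the eigenvalue lists. -/
theorem weyl_unitary_distance_eq_optimal_matching
    (n : ℕ) (hn : 1 ≤ n) (a b : Matrix (Fin n) (Fin n) ℂ)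
    (ha : a.IsHermitian) (hb : b.IsHermitian) :
    (⨅ u : Matrix.unitaryGroup (Fin n) ℂ,
        ‖Matrix.toEuclideanCLM (𝕜 := ℂ)
          (a - (u : Matrix (Fin n) (Fin n) ℂ) * b * star (u : Matrix (Fin n) (Fin n) ℂ))‖)
      = ⨅ σ : Equiv.Perm (Fin n), ⨆ i : Fin n, |ha.eigenvalues i - hb.eigenvalues (σ i)| :=
  weyl_unitary_distance_eq_optimal_matching_general n a b ha hb
end

section
/- Let n ≥ 1 and let a, b : Fin n → ℝ be monotone nondecreasing functions. Then min over all permutations σ of Fin n of max_{i} |a(i) − b(σ(i))| equals max_{i} |a(i) − b(i)|; that is, the optimal matching distance between two lists of real numbers is attained by pairing them in increasing order. -/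
/-!
Given a permutation `σ` and an index `i` with, say, `b i ≤ a i`, the `n - i` indices `j ≥ i`
cannot all be sent by `σ` above `i`, since only `n - i - 1` slots lie there. For such a `j`
monotonicity gives `a i - b i ≤ a j - b (σ j)`, so the identity matching is never beaten.
-/

open Finset

section LinearOrder

variable {α : Type*} [LinearOrder α]

theorem Function.Injective.exists_le_and_apply_le [LocallyFiniteOrderTop α] {f : α → α}
    (hf : f.Injective) (i : α) : ∃ j, i ≤ j ∧ f j ≤ i := by
  by_contra! h
  have hmaps : Set.MapsTo f (Ici i) (Ioi i) := fun j hj => by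
    simpa using h j (mem_Ici.mp hj)
  have hcard : #(Ici i) ≤ #(Ioi i) := card_le_card_of_injOn f hmaps hf.injOn
  rw [Ici_eq_cons_Ioi, card_cons] at hcard
  omega

theorem Function.Injective.exists_le_and_le_apply [LocallyFiniteOrderBot α] {f : α → α}
    (hf : f.Injective) (i : α) : ∃ j, j ≤ i ∧ i ≤ f j :=
  Function.Injective.exists_le_and_apply_le (α := αᵒᵈ) hf i

variable {β : Type*} [AddCommGroup β] [LinearOrder β] [IsOrderedAddMonoid β]

theorem Monotone.exists_abs_sub_le_abs_sub_apply [LocallyFiniteOrderTop α]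
    [LocallyFiniteOrderBot α] {a b : α → β} (ha : Monotone a) (hb : Monotone b) {f : α → α}
    (hf : f.Injective) (i : α) : ∃ j, |a i - b i| ≤ |a j - b (f j)| := by
  rcases le_total (b i) (a i) with hba | hab
  · obtain ⟨j, hij, hfj⟩ := hf.exists_le_and_apply_le i
    refine ⟨j, ?_⟩
    calc |a i - b i| = a i - b i := abs_of_nonneg (sub_nonneg.mpr hba)
      _ ≤ a j - b (f j) := sub_le_sub (ha hij) (hb hfj)
      _ ≤ |a j - b (f j)| := le_abs_self _
  · obtain ⟨j, hji, hfj⟩ := hf.exists_le_and_le_apply i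
    refine ⟨j, ?_⟩
    calc |a i - b i| = b i - a i := by rw [abs_sub_comm, abs_of_nonneg (sub_nonneg.mpr hab)]
      _ ≤ b (f j) - a j := sub_le_sub (hb hfj) (ha hji)
      _ ≤ |a j - b (f j)| := by rw [abs_sub_comm]; exact le_abs_self _

end LinearOrder

theorem optimal_matching_of_monotone_general
    (n : ℕ) (a b : Fin n → ℝ) (ha : Monotone a) (hb : Monotone b) :
    (⨅ σ : Equiv.Perm (Fin n), ⨆ i : Fin n, |a i - b (σ i)|)
      = ⨆ i : Fin n, |a i - b i| := by
  refine le_antisymm (ciInf_le (Set.finite_range _).bddBelow 1) (le_ciInf fun σ => ?_)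
  refine Real.iSup_le (fun i => ?_) (Real.iSup_nonneg fun _ => abs_nonneg _)
  obtain ⟨j, hj⟩ := ha.exists_abs_sub_le_abs_sub_apply hb σ.injective i
  exact hj.trans (le_ciSup (f := fun j => |a j - b (σ j)|) (Set.finite_range _).bddAbove j)

/-- The optimal matching distance between two nondecreasing lists of real numbers is
attained by pairing them in increasing order. -/
theorem optimal_matching_of_monotone
    (n : ℕ) (hn : 1 ≤ n) (a b : Fin n → ℝ) (ha : Monotone a) (hb : Monotone b) :
    (⨅ σ : Equiv.Perm (Fin n), ⨆ i : Fin n, |a i - b (σ i)|)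
      = ⨆ i : Fin n, |a i - b i| :=
  optimal_matching_of_monotone_general n a b ha hb
end

section
/- Let X be a compact metric space and let f, g : X → ℝ be continuous functions with f ≥ 0 and g ≥ 0. Then the following are equivalent: (i) for every ε > 0 there exists a continuous function x : X → ℝ such that sup_{t ∈ X} |x(t)²·g(t) − f(t)| < ε; (ii) { t ∈ X : f(t) ≠ 0 } ⊆ { t ∈ X : g(t) ≠ 0 }. -/
/-- Cuntz subequivalence in `C(X)`: for nonnegative continuous functions `f, g` on a
compact metric space `X`, `f` is Cuntz subequivalent to `g` if and only if the open
support of `f` is contained in the open support of `g`. -/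
theorem cuntz_subequivalence_in_CX
    (X : Type*) [MetricSpace X] [CompactSpace X]
    (f g : C(X, ℝ)) (hf : ∀ x, 0 ≤ f x) (hg : ∀ x, 0 ≤ g x) :
    (∀ ε > (0 : ℝ), ∃ x : C(X, ℝ), (⨆ t : X, |(x t) ^ 2 * g t - f t|) < ε) ↔
      {t : X | f t ≠ 0} ⊆ {t : X | g t ≠ 0} := by
  constructor
  · intro h t ht
    simp only [Set.mem_setOf_eq] at ht ⊢
    by_contra hgt
    have hft : 0 < f t := lt_of_le_of_ne (hf t) (Ne.symm ht)
    obtain ⟨x, hx⟩ := h (f t) hft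
    have hcont : Continuous fun s => |(x s) ^ 2 * g s - f s| :=
      (((x.continuous.pow 2).mul g.continuous).sub f.continuous).abs
    have hbdd : BddAbove (Set.range fun s => |(x s) ^ 2 * g s - f s|) :=
      (isCompact_range hcont).bddAbove
    have hle : |(x t) ^ 2 * g t - f t| ≤ ⨆ s : X, |(x s) ^ 2 * g s - f s| :=
      le_ciSup hbdd t
    rw [hgt, mul_zero, zero_sub, abs_neg, abs_of_pos hft] at hle
    linarith
  · intro hsub ε hε
    by_cases hK : ∃ t, ε / 2 ≤ f t
    · set K : Set X := {t | ε / 2 ≤ f t} with hKdef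
      have hKclosed : IsClosed K := isClosed_le continuous_const f.continuous
      have hKcomp : IsCompact K := hKclosed.isCompact
      obtain ⟨t₀, ht₀K, hmin'⟩ :=
        hKcomp.exists_isMinOn hK (g.continuous.continuousOn)
      have hmin : ∀ t ∈ K, g t₀ ≤ g t := fun t ht => hmin' ht
      set δ := g t₀ with hδdef
      have hδpos : 0 < δ := by
        have hft₀ : f t₀ ≠ 0 := by
          have h2 : ε / 2 ≤ f t₀ := ht₀K
          exact ne_of_gt (by linarith)
        exact lt_of_le_of_ne (hg t₀) (Ne.symm (hsub hft₀))
      have hdenom : ∀ t, (0 : ℝ) < max (g t) δ := fun t =>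
        lt_of_lt_of_le hδpos (le_max_right _ _)
      have hcx : Continuous fun t => Real.sqrt (max (f t - ε / 2) 0 / max (g t) δ) :=
        Real.continuous_sqrt.comp
          (Continuous.div
            ((f.continuous.sub continuous_const).max continuous_const)
            (g.continuous.max continuous_const)
            (fun t => ne_of_gt (hdenom t)))
      have key : ∀ t : X,
          |(Real.sqrt (max (f t - ε / 2) 0 / max (g t) δ)) ^ 2 * g t - f t| ≤ ε / 2 := by
        intro t
        have hnn : 0 ≤ max (f t - ε / 2) 0 / max (g t) δ :=
          div_nonneg (le_max_right _ _) (hdenom t).le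
        rw [Real.sq_sqrt hnn]
        by_cases hft : ε / 2 ≤ f t
        · have htK : t ∈ K := hft
          have hgtδ : δ ≤ g t := hmin t htK
          have hmax1 : max (f t - ε / 2) 0 = f t - ε / 2 :=
            max_eq_left (by linarith)
          have hmax2 : max (g t) δ = g t := max_eq_left hgtδ
          have hgne : g t ≠ 0 := ne_of_gt (lt_of_lt_of_le hδpos hgtδ)
          rw [hmax1, hmax2, div_mul_cancel₀ _ hgne]
          rw [show f t - ε / 2 - f t = -(ε / 2) by ring, abs_neg,
            abs_of_pos (by linarith)]
        · push_neg at hft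
          have hmax1 : max (f t - ε / 2) 0 = 0 := max_eq_right (by linarith)
          rw [hmax1, zero_div, zero_mul, zero_sub, abs_neg, abs_of_nonneg (hf t)]
          linarith
      refine ⟨⟨_, hcx⟩, ?_⟩
      simp only [ContinuousMap.coe_mk]
      exact lt_of_le_of_lt (Real.iSup_le key (by linarith)) (by linarith)
    · push_neg at hK
      refine ⟨0, ?_⟩
      have key : ∀ t : X, |((0 : C(X, ℝ)) t) ^ 2 * g t - f t| ≤ ε / 2 := by
        intro t
        simp only [ContinuousMap.zero_apply]
        rw [zero_pow (by norm_num), zero_mul, zero_sub, abs_neg, abs_of_nonneg (hf t)]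
        exact (hK t).le
      exact lt_of_le_of_lt (Real.iSup_le key (by linarith)) (by linarith)
end

section
/- Let X = { z ∈ ℂ : |z| = 1 } be the unit circle with the metric inherited from the Euclidean (chordal) metric of ℂ. Then for every pair of faithful and diffuse Borel probability measures μ, ν on X, and every ε > 0, there exists a homeomorphism h : X → X that is homotopic to the identity map of X, such that W_∞(μ, h_*ν) < ε and sup_{z ∈ X} |h(z) − z| < W_∞(μ, ν) + ε, where h_*ν denotes the pushforward measure ν ∘ h⁻¹. -/
/-!
Parametrise the circle by `expTurn t = exp (2πit)`. A faithful diffuse probability measure `μ`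
lifts to its distribution function `F_μ = liftCDF μ`, an increasing homeomorphism of `ℝ` with
`F_μ (x + 1) = F_μ x + 1` and `μ (expTurn '' Ioc a b) = F_μ b - F_μ a` for `a ≤ b ≤ a + 1`.
For every constant `c`, `H = F_μ⁻¹ ∘ (F_ν + c)` commutes with `x ↦ x + 1`, so it descends to a
homeomorphism `h` of the circle, homotopic to the identity through the descents of
`(1 - u) H + u id`, and `h` pushes `ν` forward to `μ`.

If `W_∞(μ, ν) < 2 sin (π s)`, the chord of an arc of `s` turns, then the `μ`-mass of an arc is at
most the `ν`-mass of the arc lengthened by `s` at both ends: `F_μ b - F_μ a ≤ F_ν (b + s) -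
F_ν (a - s)`. By periodicity this extends to all `a, b`, and for `b < a` it is the comparison in
the reverse direction. Hence `F_μ (x - s) - F_ν x ≤ F_μ (y + s) - F_ν y` for all `x, y`, and a
constant `c` in between gives `|H x - x| ≤ s`: `h` moves no point farther than `2 sin (π s)`.
-/

open MeasureTheory

/-- The ∞-Wasserstein distance between two Borel measures on a metric space:
`W_∞(μ, ν) = inf { r > 0 : μ(U) ≤ ν(U_r) and ν(U) ≤ μ(U_r) for every open U }`,
where `U_r` is the open `r`-neighbourhood of `U`. -/
noncomputable def infWasserstein {X : Type*} [MetricSpace X] [MeasurableSpace X]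
    (μ ν : Measure X) : ℝ :=
  sInf { r : ℝ | 0 < r ∧ ∀ U : Set X, IsOpen U →
    μ U ≤ ν (Metric.thickening r U) ∧ ν U ≤ μ (Metric.thickening r U) }

open Set Real ProbabilityTheory
open scoped ENNReal

section InfWasserstein

variable {X : Type*} [MetricSpace X] [MeasurableSpace X]

lemma infWasserstein_nonneg (μ ν : Measure X) : 0 ≤ infWasserstein μ ν :=
  Real.sInf_nonneg fun _ hr => hr.1.le

lemma infWasserstein_self (μ : Measure X) : infWasserstein μ μ = 0 := by
  have h : {r : ℝ | 0 < r ∧ ∀ U : Set X, IsOpen U →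
      μ U ≤ μ (Metric.thickening r U) ∧ μ U ≤ μ (Metric.thickening r U)} = Ioi 0 := by
    ext r
    have hmono (U : Set X) (hr : 0 < r) :=
      measure_mono (μ := μ) (Metric.self_subset_thickening hr U)
    exact ⟨fun h => h.1, fun h => ⟨h, fun U _ => ⟨hmono U h, hmono U h⟩⟩⟩
  rw [infWasserstein, h, csInf_Ioi]

lemma measure_le_thickening_of_infWasserstein_lt [BoundedSpace X] {μ ν : Measure X}
    [IsProbabilityMeasure μ] [IsProbabilityMeasure ν] {r : ℝ} (hr : infWasserstein μ ν < r)
    {U : Set X} (hU : IsOpen U) : μ U ≤ ν (Metric.thickening r U) := by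
  have hne : {r : ℝ | 0 < r ∧ ∀ U : Set X, IsOpen U →
      μ U ≤ ν (Metric.thickening r U) ∧ ν U ≤ μ (Metric.thickening r U)}.Nonempty := by
    refine ⟨Metric.diam (univ : Set X) + 1, by positivity, fun U _ => ?_⟩
    rcases U.eq_empty_or_nonempty with rfl | ⟨x, hx⟩
    · simp
    have hU : Metric.thickening (Metric.diam (univ : Set X) + 1) U = univ :=
      eq_univ_of_forall fun y => Metric.mem_thickening_iff.2 ⟨x, hx,
        (Metric.dist_le_diam_of_mem BoundedSpace.bounded_univ trivial trivial).trans_lt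
          (lt_add_one _)⟩
    simp [hU, prob_le_one]
  obtain ⟨t, ⟨-, ht⟩, htr⟩ := exists_lt_of_csInf_lt hne hr
  exact (ht U hU).1.trans (measure_mono (Metric.thickening_mono htr.le U))

end InfWasserstein

lemma ProbabilityTheory.continuous_cdf (ν : Measure ℝ) [IsProbabilityMeasure ν]
    [NullSingletonClass ν] : Continuous (cdf ν) := by
  refine continuous_iff_continuousAt.2 fun x => ?_
  rw [(cdf ν).mono.continuousAt_iff_leftLim_eq_rightLim, StieltjesFunction.rightLim_eq]
  refine le_antisymm ((cdf ν).mono.leftLim_le le_rfl) ?_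
  have h := (cdf ν).measure_singleton x
  rw [measure_cdf, measure_singleton, eq_comm, ENNReal.ofReal_eq_zero] at h
  linarith

namespace CircleDeg1Lift

lemma continuous_units (H : CircleDeg1Liftˣ) : Continuous H := by
  rw [← coe_toOrderIso]
  exact (toOrderIso H).continuous

lemma sub_le_sub_of_le_add_one (F G : CircleDeg1Lift) {a b s : ℝ} (hb : b ≤ a + 1)
    (h : a - s + 1 ≤ b + s) : F b - F a ≤ G (b + s) - G (a - s) := by
  have h1 := F.mono hb
  have h2 := G.mono h
  rw [F.map_add_one] at h1
  rw [G.map_add_one] at h2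
  linarith

lemma forall_sub_le_of_forall_lt_add_one (F G : CircleDeg1Lift) {s : ℝ}
    (h : ∀ a b, a ≤ b → b < a + 1 → F b - F a ≤ G (b + s) - G (a - s)) (a b : ℝ) :
    F b - F a ≤ G (b + s) - G (a - s) := by
  have h1 := h a (b - ⌊b - a⌋) (by linarith [Int.floor_le (b - a)])
    (by linarith [Int.lt_floor_add_one (b - a)])
  rw [F.map_sub_int, show b - ⌊b - a⌋ + s = b + s - ⌊b - a⌋ by ring, G.map_sub_int] at h1
  linarith

lemma exists_forall_add_const_mem_Icc (F G : CircleDeg1Lift) {s : ℝ}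
    (h : ∀ a b, F b - F a ≤ G (b + s) - G (a - s)) :
    ∃ c, ∀ x, G x + c ∈ Icc (F (x - s)) (F (x + s)) := by
  have key (x y : ℝ) : F (x - s) - G x ≤ F (y + s) - G y := by
    have := h (y + s) (x - s)
    rw [sub_add_cancel, add_sub_cancel_right] at this
    linarith
  refine ⟨⨆ x, (F (x - s) - G x), fun x => ⟨?_, ?_⟩⟩
  · linarith [le_ciSup ⟨_, forall_mem_range.2 fun x => key x 0⟩ x]
  · linarith [ciSup_le fun y => key y x]

lemma exists_unit_map_eq_add_abs_sub_le (F G : CircleDeg1Liftˣ) {s : ℝ}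
    (h : ∀ a b, F b - F a ≤ G (b + s) - G (a - s)) :
    ∃ H : CircleDeg1Liftˣ, ∃ c, (∀ x, F (H x) = G x + c) ∧ ∀ x, |H x - x| ≤ s := by
  obtain ⟨c, hc⟩ := exists_forall_add_const_mem_Icc F G h
  set H := F⁻¹ * translate (Multiplicative.ofAdd c) * G
  have hH (x : ℝ) : H x = (toOrderIso F).symm (G x + c) := by
    simp [H, mul_apply, translate_apply, add_comm]
  refine ⟨H, c, fun x => ?_, fun x => abs_sub_le_iff.2 ⟨?_, ?_⟩⟩
  · rw [hH, ← coe_toOrderIso, OrderIso.apply_symm_apply]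
  · rw [hH, sub_le_iff_le_add', OrderIso.symm_apply_le]
    exact (hc x).2
  · rw [hH, sub_le_comm, OrderIso.le_symm_apply]
    exact (hc x).1

end CircleDeg1Lift

namespace CircleTransport

abbrev S : Set ℂ := {z : ℂ | ‖z‖ = 1}

noncomputable def expTurn (t : ℝ) : S :=
  ⟨Complex.exp ((2 * π * t : ℝ) * Complex.I), Complex.norm_exp_ofReal_mul_I _⟩

lemma coe_expTurn (t : ℝ) :
    (expTurn t : ℂ) = Complex.exp ((2 * π * t : ℝ) * Complex.I) := rfl

lemma continuous_expTurn : Continuous expTurn :=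
  (Complex.continuous_exp.comp (by fun_prop)).subtype_mk _

instance : Nonempty S := ⟨expTurn 0⟩

instance : CompactSpace S :=
  isCompact_iff_compactSpace.1 (by simpa [Metric.sphere] using isCompact_sphere (0 : ℂ) 1)

lemma expTurn_add_int (t : ℝ) (n : ℤ) : expTurn (t + n) = expTurn t := by
  apply Subtype.ext
  rw [coe_expTurn, coe_expTurn, ← mul_one (Complex.exp ((2 * π * t : ℝ) * Complex.I)),
    ← Complex.exp_int_mul_two_pi_mul_I n, ← Complex.exp_add]
  push_cast
  ring_nf

lemma expTurn_eq_expTurn_iff {u v : ℝ} : expTurn u = expTurn v ↔ ∃ n : ℤ, u = v + n := by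
  refine ⟨fun h => ?_, fun ⟨n, hn⟩ => hn ▸ expTurn_add_int v n⟩
  obtain ⟨n, hn⟩ := Complex.exp_eq_exp_iff_exists_int.1 (congrArg Subtype.val h)
  refine ⟨n, ?_⟩
  have hπ : (2 * π * Complex.I) ≠ 0 := by simp [Real.pi_ne_zero]
  have h0 : ((u : ℂ) - v - n) * (2 * π * Complex.I) = 0 := by
    push_cast at hn; linear_combination hn
  have h1 : (u : ℂ) = v + n := by
    linear_combination (mul_eq_zero.1 h0).resolve_right hπ
  exact_mod_cast h1

lemma expTurn_add_half (t : ℝ) : (expTurn (t + 1 / 2) : ℂ) = -expTurn t := by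
  rw [coe_expTurn, coe_expTurn, ← mul_neg_one, ← Complex.exp_pi_mul_I, ← Complex.exp_add]
  push_cast
  ring_nf

noncomputable def argTurn (z : S) : ℝ := Complex.arg z / (2 * π)

lemma expTurn_argTurn (z : S) : expTurn (argTurn z) = z := by
  refine Subtype.ext ?_
  rw [argTurn, coe_expTurn, mul_div_cancel₀ _ (by positivity), ← one_mul (Complex.exp _),
    ← Complex.ofReal_one, ← z.2, Complex.norm_mul_exp_arg_mul_I]

lemma argTurn_mem_Ioc (z : S) : argTurn z ∈ Ioc (-(1 / 2) : ℝ) (1 / 2) := by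
  have h := Complex.arg_mem_Ioc (z : ℂ)
  have hπ : (0 : ℝ) < 2 * π := by positivity
  constructor
  · rw [argTurn, lt_div_iff₀ hπ]; linarith [h.1]
  · rw [argTurn, div_le_iff₀ hπ]; linarith [h.2]

lemma argTurn_expTurn {t : ℝ} (ht : t ∈ Ioc (-(1 / 2) : ℝ) (1 / 2)) :
    argTurn (expTurn t) = t := by
  have hπ : (0 : ℝ) < 2 * π := by positivity
  rw [argTurn, coe_expTurn, Complex.arg_exp_mul_I, (toIocMod_eq_self _).2]
  · field_simp
  · constructor <;> nlinarith [ht.1, ht.2]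

lemma measurable_argTurn : Measurable argTurn :=
  (Complex.measurable_arg.comp measurable_subtype_coe).div_const _

lemma injective_argTurn : Function.Injective argTurn :=
  Function.LeftInverse.injective expTurn_argTurn

lemma injOn_expTurn (a : ℝ) : InjOn expTurn (Ioc a (a + 1)) := by
  intro u hu v hv h
  obtain ⟨n, hn⟩ := expTurn_eq_expTurn_iff.1 h
  have hn1 : |(n : ℝ)| < 1 := abs_lt.2 ⟨by linarith [hu.1, hv.2], by linarith [hu.2, hv.1]⟩
  obtain rfl : n = 0 := Int.abs_lt_one_iff.1 (by exact_mod_cast hn1)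
  simpa using hn

lemma expTurn_image_Ioc (a : ℝ) : expTurn '' Ioc a (a + 1) = univ := by
  refine eq_univ_of_forall fun z => ⟨toIocMod one_pos a (argTurn z), toIocMod_mem_Ioc _ _ _, ?_⟩
  conv_rhs => rw [← expTurn_argTurn z]
  refine expTurn_eq_expTurn_iff.2 ⟨-toIocDiv one_pos a (argTurn z), ?_⟩
  have := self_sub_toIocMod one_pos a (argTurn z)
  rw [zsmul_one] at this
  push_cast
  linarith

lemma expTurn_image_Ioc_eq_preimage {a b : ℝ} (ha : -(1 / 2) ≤ a) (hb : b ≤ 1 / 2) :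
    expTurn '' Ioc a b = argTurn ⁻¹' Ioc a b := by
  ext z
  constructor
  · rintro ⟨t, ht, rfl⟩
    rwa [mem_preimage, argTurn_expTurn ⟨ha.trans_lt ht.1, ht.2.trans hb⟩]
  · exact fun hz => ⟨argTurn z, hz, expTurn_argTurn z⟩

lemma dist_expTurn (u v : ℝ) : dist (expTurn u) (expTurn v) = 2 * |sin (π * (u - v))| := by
  have h : (expTurn u : ℂ) - expTurn v = Complex.exp ((2 * π * v : ℝ) * Complex.I) *
      (Complex.exp (Complex.I * (2 * π * (u - v) : ℝ)) - 1) := by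
    rw [coe_expTurn, coe_expTurn, mul_sub, mul_one, ← Complex.exp_add]
    push_cast; ring_nf
  rw [Subtype.dist_eq, Complex.dist_eq, h, norm_mul, Complex.norm_exp_ofReal_mul_I, one_mul,
    Complex.norm_exp_I_mul_ofReal_sub_one, norm_mul, Real.norm_two, Real.norm_eq_abs]
  ring_nf

lemma expTurn_image_Ioc_add_int (a b : ℝ) (n : ℤ) :
    expTurn '' Ioc (a + n) (b + n) = expTurn '' Ioc a b := by
  rw [← image_add_const_Ioc, image_image]
  simp only [expTurn_add_int]

lemma isOpen_expTurn_image_Ioo {a b : ℝ} (hb : b ≤ a + 1) : IsOpen (expTurn '' Ioo a b) := by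
  rcases le_or_gt b a with hab | hab
  · simp [Ioo_eq_empty_of_le hab]
  have hcompl : IsCompl (expTurn '' Ioo a b) (expTurn '' Icc b (a + 1)) := by
    refine IsCompl.of_eq ?_ ?_
    · exact (Disjoint.image (s := Ioo a b) (t := Icc b (a + 1))
        (Set.disjoint_left.2 fun _ hx hy => hy.1.not_gt hx.2) (injOn_expTurn a)
        (Ioo_subset_Ioc_self.trans (Ioc_subset_Ioc_right hb))
        ((Icc_subset_Ioc_iff hb).2 ⟨hab, le_rfl⟩)).eq_bot
    · change _ ∪ _ = univ
      rw [← image_union, Ioo_union_Icc_eq_Ioc hab hb, expTurn_image_Ioc]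
  rw [hcompl.eq_compl]
  exact ((isCompact_Icc.image continuous_expTurn).isClosed).isOpen_compl

lemma measurableSet_expTurn_image_Ioc {a b : ℝ} (hb : b ≤ a + 1) :
    MeasurableSet (expTurn '' Ioc a b) :=
  measurableSet_Ioc.image_of_continuousOn_injOn continuous_expTurn.continuousOn
    ((injOn_expTurn a).mono (Ioc_subset_Ioc_right hb))

section LiftCDF

variable (μ : Measure S)

instance [IsProbabilityMeasure μ] : IsProbabilityMeasure (μ.map argTurn) :=
  Measure.isProbabilityMeasure_map measurable_argTurn.aemeasurable

instance [NullSingletonClass μ] : NullSingletonClass (μ.map argTurn) where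
  measure_singleton x := by
    rw [Measure.map_apply measurable_argTurn (measurableSet_singleton x)]
    refine measure_mono_null (fun z hz => ?_) (measure_singleton (expTurn x))
    rw [mem_singleton_iff, ← (mem_singleton_iff.1 hz), expTurn_argTurn]

noncomputable def liftCDF : CircleDeg1Lift where
  -- `x - ⌈x - 1 / 2⌉` is the representative of `x` in `Ioc (-1/2) (1/2)`, the range of `argTurn`
  toFun x := ⌈x - 1 / 2⌉ + cdf (μ.map argTurn) (x - ⌈x - 1 / 2⌉)
  monotone' x y hxy := by
    dsimp only
    obtain hk | hk := (Int.ceil_mono (sub_le_sub_right hxy (1 / 2))).eq_or_lt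
    · rw [hk]
      linarith [monotone_cdf (μ.map argTurn) (sub_le_sub_right hxy (⌈y - 1 / 2⌉ : ℝ))]
    · have : (⌈x - 1 / 2⌉ : ℝ) + 1 ≤ ⌈y - 1 / 2⌉ := by exact_mod_cast hk
      linarith [cdf_le_one (μ.map argTurn) (x - ⌈x - 1 / 2⌉),
        cdf_nonneg (μ.map argTurn) (y - ⌈y - 1 / 2⌉)]
  map_add_one' x := by
    rw [show x + 1 - 1 / 2 = x - 1 / 2 + 1 by ring, Int.ceil_add_one]
    push_cast
    ring_nf

lemma liftCDF_apply (x : ℝ) :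
    liftCDF μ x = ⌈x - 1 / 2⌉ + cdf (μ.map argTurn) (x - ⌈x - 1 / 2⌉) := rfl

variable [IsProbabilityMeasure μ]

lemma cdf_map_argTurn_of_le {x : ℝ} (hx : x ≤ -(1 / 2)) : cdf (μ.map argTurn) x = 0 := by
  have h : argTurn ⁻¹' Iic x = ∅ :=
    eq_empty_of_forall_notMem fun z hz => ((argTurn_mem_Ioc z).1.trans_le hz).not_ge hx
  rw [cdf_eq_real, measureReal_def, Measure.map_apply measurable_argTurn measurableSet_Iic, h,
    measure_empty, ENNReal.toReal_zero]

lemma cdf_map_argTurn_of_ge {x : ℝ} (hx : 1 / 2 ≤ x) : cdf (μ.map argTurn) x = 1 := by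
  have h : argTurn ⁻¹' Iic x = univ :=
    eq_univ_of_forall fun z => (argTurn_mem_Ioc z).2.trans hx
  rw [cdf_eq_real, measureReal_def, Measure.map_apply measurable_argTurn measurableSet_Iic, h,
    measure_univ, ENNReal.toReal_one]

lemma liftCDF_apply_of_mem_Icc {x : ℝ} (hx : x ∈ Icc (-(1 / 2)) (1 / 2)) :
    liftCDF μ x = cdf (μ.map argTurn) x := by
  obtain rfl | hx1 := hx.1.eq_or_lt
  · have h := (liftCDF μ).map_add_one (-(1 / 2))
    rw [show -(1 / 2) + 1 = (1 / 2 : ℝ) by norm_num] at h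
    have h' : liftCDF μ (1 / 2) = 1 := by
      rw [liftCDF_apply, sub_self, Int.ceil_zero, Int.cast_zero, sub_zero, zero_add,
        cdf_map_argTurn_of_ge μ le_rfl]
    rw [cdf_map_argTurn_of_le μ le_rfl]
    linarith
  · have hk : ⌈x - 1 / 2⌉ = 0 := Int.ceil_eq_zero_iff.2 ⟨by linarith, by linarith [hx.2]⟩
    rw [liftCDF_apply, hk, Int.cast_zero, sub_zero, zero_add]

lemma measure_expTurn_image_Ioc_of_subset_Icc {a b : ℝ} (ha : -(1 / 2) ≤ a) (hab : a ≤ b)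
    (hb : b ≤ 1 / 2) :
    μ (expTurn '' Ioc a b) = ENNReal.ofReal (liftCDF μ b - liftCDF μ a) := by
  rw [expTurn_image_Ioc_eq_preimage ha hb,
    ← Measure.map_apply measurable_argTurn measurableSet_Ioc, ← measure_cdf (μ.map argTurn),
    StieltjesFunction.measure_Ioc, liftCDF_apply_of_mem_Icc μ ⟨ha, hab.trans hb⟩,
    liftCDF_apply_of_mem_Icc μ ⟨ha.trans hab, hb⟩]

lemma measure_expTurn_image_Ioc {a b : ℝ} (hab : a ≤ b) (hb : b ≤ a + 1) :
    μ (expTurn '' Ioc a b) = ENNReal.ofReal (liftCDF μ b - liftCDF μ a) := by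
  wlog ha : a ∈ Ico (-(1 / 2)) (1 / 2) generalizing a b
  · set n := ⌊a + 1 / 2⌋
    have h := this (a := a - n) (b := b - n) (by linarith) (by linarith)
      ⟨by linarith [Int.floor_le (a + 1 / 2)], by linarith [Int.lt_floor_add_one (a + 1 / 2)]⟩
    rwa [← expTurn_image_Ioc_add_int (a - n) (b - n) n, sub_add_cancel, sub_add_cancel,
      (liftCDF μ).map_sub_int, (liftCDF μ).map_sub_int, sub_sub_sub_cancel_right] at h
  obtain ⟨ha1, ha2⟩ := ha
  rcases le_total b (1 / 2) with hb' | hb'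
  · exact measure_expTurn_image_Ioc_of_subset_Icc μ ha1 hab hb'
  have hshift : expTurn '' Ioc (1 / 2) b = expTurn '' Ioc (-(1 / 2)) (b - 1) := by
    rw [← expTurn_image_Ioc_add_int (-(1 / 2)) (b - 1) 1]
    norm_num
  have hdisj : Disjoint (expTurn '' Ioc a (1 / 2)) (expTurn '' Ioc (1 / 2) b) :=
    Disjoint.image (Ioc_disjoint_Ioc_of_le le_rfl) (injOn_expTurn a)
      (Ioc_subset_Ioc_right (by linarith)) (Ioc_subset_Ioc ha2.le hb)
  have h1 := (liftCDF μ).map_add_one (-(1 / 2))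
  have h2 := (liftCDF μ).map_add_one (b - 1)
  norm_num at h1 h2
  rw [← Ioc_union_Ioc_eq_Ioc ha2.le hb', image_union,
    measure_union hdisj (measurableSet_expTurn_image_Ioc (by linarith)), hshift,
    measure_expTurn_image_Ioc_of_subset_Icc μ ha1 ha2.le le_rfl,
    measure_expTurn_image_Ioc_of_subset_Icc μ le_rfl (by linarith) (by linarith),
    ← ENNReal.ofReal_add (sub_nonneg.2 ((liftCDF μ).mono ha2.le))
      (sub_nonneg.2 ((liftCDF μ).mono (by linarith)))]
  congr 1
  linarith

lemma measure_expTurn_image_Ioo [NullSingletonClass μ] {a b : ℝ} (hab : a ≤ b)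
    (hb : b ≤ a + 1) :
    μ (expTurn '' Ioo a b) = ENNReal.ofReal (liftCDF μ b - liftCDF μ a) := by
  rcases hab.eq_or_lt with rfl | hab
  · simp
  rw [← measure_expTurn_image_Ioc μ hab.le hb, ← Ioo_insert_right hab, image_insert_eq,
    measure_congr (insert_ae_eq_self _ _)]

lemma liftCDF_strictMono [μ.IsOpenPosMeasure] : StrictMono (liftCDF μ) := by
  intro x y hxy
  have hy' : x < min y (x + 1) := lt_min hxy (by linarith)
  have hpos : 0 < μ (expTurn '' Ioc x (min y (x + 1))) :=
    ((isOpen_expTurn_image_Ioo (min_le_right _ _)).measure_pos μ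
      ((nonempty_Ioo.2 hy').image _)).trans_le (measure_mono (image_mono Ioo_subset_Ioc_self))
  rw [measure_expTurn_image_Ioc μ hy'.le (min_le_right _ _), ENNReal.ofReal_pos, sub_pos] at hpos
  exact hpos.trans_le ((liftCDF μ).mono (min_le_left _ _))

lemma liftCDF_surjective [NullSingletonClass μ] : Function.Surjective (liftCDF μ) := by
  intro y
  obtain ⟨x, hx, hFx⟩ : y - ⌊y⌋ ∈ cdf (μ.map argTurn) '' Icc (-(1 / 2)) (1 / 2) := by
    refine intermediate_value_Icc (by norm_num) (continuous_cdf _).continuousOn ?_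
    rw [cdf_map_argTurn_of_le μ le_rfl, cdf_map_argTurn_of_ge μ le_rfl]
    exact ⟨sub_nonneg.2 (Int.floor_le y), (sub_lt_iff_lt_add'.2 (Int.lt_floor_add_one y)).le⟩
  refine ⟨x + ⌊y⌋, ?_⟩
  rw [(liftCDF μ).map_add_int, liftCDF_apply_of_mem_Icc μ hx, hFx, sub_add_cancel]

lemma isUnit_liftCDF [μ.IsOpenPosMeasure] [NullSingletonClass μ] : IsUnit (liftCDF μ) :=
  CircleDeg1Lift.isUnit_iff_bijective.2
    ⟨(liftCDF_strictMono μ).injective, liftCDF_surjective μ⟩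

end LiftCDF

section Descent

lemma continuousAt_argTurn {z : S} (hz : (z : ℂ) ≠ -1) : ContinuousAt argTurn z := by
  have hslit : (z : ℂ) ∈ Complex.slitPlane := by
    refine Complex.mem_slitPlane_iff_arg.2 ⟨fun h => hz ?_, fun h => by simpa [h] using z.2⟩
    rw [← Complex.norm_mul_exp_arg_mul_I (z : ℂ), h, z.2, Complex.ofReal_one, one_mul,
      Complex.exp_pi_mul_I]
  exact ((Complex.continuousAt_arg hslit).comp continuous_subtype_val.continuousAt).div_const _

lemma continuous_comp_argTurn {Y : Type*} [TopologicalSpace Y] {g : Y → ℝ → S}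
    (hg : Continuous (Function.uncurry g)) (hper : ∀ y t (n : ℤ), g y (t + n) = g y t) :
    Continuous fun p : Y × S => g p.1 (argTurn p.2) := by
  refine continuous_iff_continuousAt.2 fun ⟨y, z⟩ => ?_
  by_cases hz : (z : ℂ) = -1
  · -- near `-1`, use the chart `w ↦ argTurn (-w) + 1/2` instead
    let neg : S → S := fun w => ⟨-w, show ‖-(w : ℂ)‖ = 1 by rw [norm_neg]; exact w.2⟩
    have hneg : Continuous neg := continuous_subtype_val.neg.subtype_mk _
    have hchart (w : S) : ∃ n : ℤ, argTurn w = argTurn (neg w) + 1 / 2 + n := by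
      refine expTurn_eq_expTurn_iff.1 (Subtype.ext ?_)
      rw [expTurn_argTurn, expTurn_add_half, expTurn_argTurn, neg_neg]
    have heq : (fun p : Y × S => g p.1 (argTurn p.2))
        = fun p => g p.1 (argTurn (neg p.2) + 1 / 2) := by
      funext p
      obtain ⟨n, hn⟩ := hchart p.2
      rw [hn, hper]
    have hz' : ((neg z : S) : ℂ) ≠ -1 := by
      simp only [neg, hz, neg_neg]
      norm_num
    have hchart : ContinuousAt (fun p : Y × S => argTurn (neg p.2) + 1 / 2) (y, z) :=
      ((continuousAt_argTurn hz').comp (x := (y, z)) (hneg.comp continuous_snd).continuousAt).add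
        continuousAt_const
    rw [heq]
    exact hg.continuousAt.comp (continuousAt_fst.prodMk hchart)
  · have hchart : ContinuousAt (fun p : Y × S => argTurn p.2) (y, z) :=
      (continuousAt_argTurn hz).comp (x := (y, z)) (f := Prod.snd) continuousAt_snd
    exact hg.continuousAt.comp (continuousAt_fst.prodMk hchart)

noncomputable def circleMap (f : CircleDeg1Lift) (z : S) : S := expTurn (f (argTurn z))

lemma circleMap_expTurn (f : CircleDeg1Lift) (t : ℝ) :
    circleMap f (expTurn t) = expTurn (f t) := by
  obtain ⟨n, hn⟩ := expTurn_eq_expTurn_iff.1 (expTurn_argTurn (expTurn t))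
  rw [circleMap, hn, f.map_add_int, expTurn_add_int]

lemma continuous_circleMap {f : CircleDeg1Lift} (hf : Continuous f) : Continuous (circleMap f) :=
  (continuous_comp_argTurn (g := fun (_ : Unit) t => expTurn (f t))
    (continuous_expTurn.comp (hf.comp continuous_snd))
    (fun _ t n => by simp only [f.map_add_int, expTurn_add_int])).comp
    (continuous_const.prodMk continuous_id : Continuous fun z : S => ((), z))

noncomputable def circleHomeo (H : CircleDeg1Liftˣ) : S ≃ₜ S where
  toFun := circleMap H
  invFun := circleMap ↑H⁻¹
  left_inv z := by
    rw [← expTurn_argTurn z, circleMap_expTurn, circleMap_expTurn,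
      CircleDeg1Lift.units_inv_apply_apply]
  right_inv z := by
    rw [← expTurn_argTurn z, circleMap_expTurn, circleMap_expTurn,
      CircleDeg1Lift.units_apply_inv_apply]
  continuous_toFun := continuous_circleMap (CircleDeg1Lift.continuous_units H)
  continuous_invFun := continuous_circleMap (CircleDeg1Lift.continuous_units H⁻¹)

lemma circleHomeo_expTurn (H : CircleDeg1Liftˣ) (t : ℝ) :
    circleHomeo H (expTurn t) = expTurn (H t) :=
  circleMap_expTurn _ t

lemma circleHomeo_homotopic (H : CircleDeg1Liftˣ) :
    ContinuousMap.Homotopic (circleHomeo H : C(S, S)) (ContinuousMap.id S) := by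
  refine ⟨{ toFun := fun p => expTurn ((1 - p.1) * H (argTurn p.2) + p.1 * argTurn p.2)
            continuous_toFun := ?_
            map_zero_left := fun z => by simp [circleHomeo, circleMap]
            map_one_left := fun z => by simp [expTurn_argTurn] }⟩
  have hH := CircleDeg1Lift.continuous_units H
  refine continuous_comp_argTurn (g := fun (u : unitInterval) t => expTurn ((1 - u) * H t + u * t))
    (continuous_expTurn.comp (by fun_prop)) fun u t n => ?_
  rw [(H : CircleDeg1Lift).map_add_int, ← expTurn_add_int ((1 - u) * H t + u * t) n]
  ring_nf

lemma preimage_circleHomeo_expTurn_image_Ioc (H : CircleDeg1Liftˣ) (a b : ℝ) :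
    circleHomeo H ⁻¹' (expTurn '' Ioc a b) = expTurn '' Ioc (H⁻¹ a) (H⁻¹ b) := by
  have h (t : ℝ) : (circleHomeo H).symm (expTurn t) = expTurn (H⁻¹ t) := circleMap_expTurn _ t
  rw [← Homeomorph.image_symm, image_image]
  simp only [h]
  rw [← image_image expTurn, ← CircleDeg1Lift.coe_toOrderIso, OrderIso.image_Ioc]

end Descent

lemma ext_of_measure_expTurn_image_Ioc {μ ν : Measure S} [IsProbabilityMeasure μ]
    [IsProbabilityMeasure ν]
    (h : ∀ a b, a ≤ b → b ≤ a + 1 → μ (expTurn '' Ioc a b) = ν (expTurn '' Ioc a b)) :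
    μ = ν := by
  have hemb : MeasurableEmbedding argTurn :=
    measurable_argTurn.measurableEmbedding injective_argTurn
  rw [← hemb.comap_map μ, ← hemb.comap_map ν]
  congr 1
  refine Measure.ext_of_Iic _ _ fun v => ?_
  have hpre :
      argTurn ⁻¹' Iic v = expTurn '' Ioc (-(1 / 2)) (max (-(1 / 2)) (min v (1 / 2))) := by
    rw [expTurn_image_Ioc_eq_preimage le_rfl (max_le (by norm_num) (min_le_right _ _))]
    ext z
    have hz := argTurn_mem_Ioc z
    simp only [mem_preimage, mem_Iic, mem_Ioc, le_max_iff, le_min_iff]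
    constructor
    · exact fun h => ⟨hz.1, Or.inr ⟨h, hz.2⟩⟩
    · rintro ⟨-, h | ⟨h, -⟩⟩
      · linarith [hz.1]
      · exact h
  rw [hemb.map_apply, hemb.map_apply, hpre,
    h _ _ (le_max_left _ _) (max_le (by norm_num) (by linarith [min_le_right v (1 / 2)]))]

lemma map_circleHomeo_eq {μ ν : Measure S} [IsProbabilityMeasure μ] [IsProbabilityMeasure ν]
    (H : CircleDeg1Liftˣ) (c : ℝ) (hH : ∀ x, liftCDF μ (H x) = liftCDF ν x + c) :
    ν.map (circleHomeo H) = μ := by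
  have : IsProbabilityMeasure (ν.map (circleHomeo H)) :=
    Measure.isProbabilityMeasure_map (circleHomeo H).measurable.aemeasurable
  refine ext_of_measure_expTurn_image_Ioc fun a b hab hb => ?_
  have hinv (x : ℝ) : liftCDF ν (H⁻¹ x) = liftCDF μ x - c := by
    rw [eq_sub_iff_add_eq, ← hH, CircleDeg1Lift.units_apply_inv_apply]
  have hb' : H⁻¹ b ≤ H⁻¹ a + 1 := by
    rw [← CircleDeg1Lift.map_add_one]
    exact CircleDeg1Lift.mono _ hb
  rw [Measure.map_apply (circleHomeo H).measurable (measurableSet_expTurn_image_Ioc hb),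
    preimage_circleHomeo_expTurn_image_Ioc, measure_expTurn_image_Ioc μ hab hb,
    measure_expTurn_image_Ioc ν (CircleDeg1Lift.mono _ hab) hb', hinv, hinv,
    sub_sub_sub_cancel_right]

section Chord

lemma abs_sin_pi_mul {d : ℝ} (hd : |d| ≤ 1 / 2) : |sin (π * d)| = sin (π * |d|) := by
  have h0 : 0 ≤ sin (π * |d|) :=
    sin_nonneg_of_nonneg_of_le_pi (by positivity) (by nlinarith [pi_pos])
  rw [← abs_of_nonneg h0]
  rcases abs_choice d with h | h <;> rw [h]
  rw [mul_neg, sin_neg, abs_neg]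

lemma strictMonoOn_sin_pi_mul : StrictMonoOn (fun t => sin (π * t)) (Icc 0 (1 / 2)) :=
  fun x hx y hy hxy => sin_lt_sin_of_lt_of_le_pi_div_two (by nlinarith [pi_pos, hx.1])
    (by nlinarith [pi_pos, hy.2]) (by nlinarith [pi_pos])

lemma dist_expTurn_add_le {t d s : ℝ} (hs : s ≤ 1 / 2) (hd : |d| ≤ s) :
    dist (expTurn (t + d)) (expTurn t) ≤ 2 * sin (π * s) := by
  rw [dist_expTurn, add_sub_cancel_left, abs_sin_pi_mul (hd.trans hs)]
  have := strictMonoOn_sin_pi_mul.monotoneOn ⟨abs_nonneg d, hd.trans hs⟩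
    ⟨(abs_nonneg d).trans hd, hs⟩ hd
  linarith

lemma exists_eq_expTurn_add_of_dist_lt {z : S} {t s : ℝ} (hs0 : 0 ≤ s) (hs : s ≤ 1 / 2)
    (h : dist z (expTurn t) < 2 * sin (π * s)) : ∃ d, |d| < s ∧ z = expTurn (t + d) := by
  obtain ⟨u, hu, rfl⟩ : z ∈ expTurn '' Ioc (t - 1 / 2) (t - 1 / 2 + 1) := by
    rw [expTurn_image_Ioc]; trivial
  refine ⟨u - t, ?_, by rw [add_sub_cancel]⟩
  have hd : |u - t| ≤ 1 / 2 := abs_le.2 ⟨by linarith [hu.1], by linarith [hu.2]⟩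
  rw [dist_expTurn, abs_sin_pi_mul hd] at h
  by_contra! hle
  have := strictMonoOn_sin_pi_mul.monotoneOn ⟨hs0, hs⟩ ⟨abs_nonneg _, hd⟩ hle
  linarith

lemma thickening_expTurn_image_Ioo_subset {a b s : ℝ} (hs0 : 0 ≤ s) (hs : s ≤ 1 / 2) :
    Metric.thickening (2 * sin (π * s)) (expTurn '' Ioo a b) ⊆
      expTurn '' Ioo (a - s) (b + s) := by
  intro z hz
  obtain ⟨_, ⟨t, ht, rfl⟩, hdist⟩ := Metric.mem_thickening_iff.1 hz
  obtain ⟨d, hd, rfl⟩ := exists_eq_expTurn_add_of_dist_lt hs0 hs hdist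
  have := abs_lt.1 hd
  exact ⟨t + d, ⟨by linarith [ht.1], by linarith [ht.2]⟩, rfl⟩

lemma dist_circleHomeo_le (H : CircleDeg1Liftˣ) {s : ℝ} (hs : s ≤ 1 / 2)
    (hH : ∀ x, |H x - x| ≤ s) (z : S) : dist (circleHomeo H z) z ≤ 2 * sin (π * s) := by
  rw [← expTurn_argTurn z, circleHomeo_expTurn, ← add_sub_cancel (argTurn z) (H (argTurn z))]
  exact dist_expTurn_add_le hs (hH _)

end Chord

lemma forall_liftCDF_sub_le_of_measure_le_thickening (μ ν : Measure S) [IsProbabilityMeasure μ]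
    [IsProbabilityMeasure ν] [NullSingletonClass μ] {s : ℝ} (hs0 : 0 ≤ s) (hs : s ≤ 1 / 2)
    (h : ∀ U, IsOpen U → μ U ≤ ν (Metric.thickening (2 * sin (π * s)) U)) (a b : ℝ) :
    liftCDF μ b - liftCDF μ a ≤ liftCDF ν (b + s) - liftCDF ν (a - s) := by
  refine CircleDeg1Lift.forall_sub_le_of_forall_lt_add_one _ _ (fun a b hab hb => ?_) a b
  rcases le_or_gt (a - s + 1) (b + s) with hlong | hshort
  · -- the lengthened arc covers the whole circle
    exact CircleDeg1Lift.sub_le_sub_of_le_add_one _ _ hb.le hlong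
  have harc := (h _ (isOpen_expTurn_image_Ioo hb.le)).trans
    ((measure_mono (thickening_expTurn_image_Ioo_subset hs0 hs)).trans
      (measure_mono (image_mono Ioo_subset_Ioc_self)))
  rw [measure_expTurn_image_Ioo μ hab hb.le,
    measure_expTurn_image_Ioc ν (by linarith) (by linarith)] at harc
  exact (ENNReal.ofReal_le_ofReal_iff (sub_nonneg.2 ((liftCDF ν).mono (by linarith)))).1 harc

lemma exists_forall_liftCDF_sub_le (μ ν : Measure S) [IsProbabilityMeasure μ]
    [IsProbabilityMeasure ν] [NullSingletonClass μ] {r : ℝ} (hr : infWasserstein μ ν < r) :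
    ∃ s ≤ 1 / 2, 2 * sin (π * s) ≤ r ∧
      ∀ a b, liftCDF μ b - liftCDF μ a ≤ liftCDF ν (b + s) - liftCDF ν (a - s) := by
  rcases lt_or_ge r 2 with hr2 | hr2
  · have hr0 : 0 < r := (infWasserstein_nonneg μ ν).trans_lt hr
    -- the arc parameter whose chord length is exactly `r`
    set s := arcsin (r / 2) / π
    have hsin : 2 * sin (π * s) = r := by
      rw [mul_div_cancel₀ _ pi_ne_zero, sin_arcsin (by linarith) (by linarith)]
      ring
    have hs0 : 0 ≤ s := div_nonneg (arcsin_nonneg.2 (by linarith)) pi_pos.le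
    have hs : s ≤ 1 / 2 := by
      rw [div_le_iff₀ pi_pos]
      linarith [arcsin_le_pi_div_two (r / 2)]
    refine ⟨s, hs, hsin.le, forall_liftCDF_sub_le_of_measure_le_thickening μ ν hs0 hs
      fun U hU => ?_⟩
    rw [hsin]
    exact measure_le_thickening_of_infWasserstein_lt hr hU
  · refine ⟨1 / 2, le_rfl, by rw [mul_one_div, sin_pi_div_two]; linarith, ?_⟩
    exact CircleDeg1Lift.forall_sub_le_of_forall_lt_add_one _ _ fun a b _ hb =>
      CircleDeg1Lift.sub_le_sub_of_le_add_one _ _ hb.le (by linarith)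

end CircleTransport

open CircleTransport in
/-- The unit circle in the plane, with the Euclidean (chordal) metric, has continuous
transport constant `1`: for faithful diffuse Borel probability measures `μ, ν` and
`ε > 0` there is a homeomorphism `h` homotopic to the identity with
`W_∞(μ, h_*ν) < ε` and `sup_z |h(z) − z| < W_∞(μ, ν) + ε`. -/
theorem continuous_transport_constant_one_of_circle
    (X : Set ℂ) (hX : X = {z : ℂ | ‖z‖ = 1})
    (μ ν : Measure X) [IsProbabilityMeasure μ] [IsProbabilityMeasure ν]
    (hμfaithful : ∀ U : Set X, IsOpen U → U.Nonempty → 0 < μ U)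
    (hνfaithful : ∀ U : Set X, IsOpen U → U.Nonempty → 0 < ν U)
    (hμdiffuse : ∀ x : X, μ {x} = 0)
    (hνdiffuse : ∀ x : X, ν {x} = 0)
    (ε : ℝ) (hε : 0 < ε) :
    ∃ h : X ≃ₜ X,
      ContinuousMap.Homotopic (h : C(X, X)) (ContinuousMap.id X) ∧
      infWasserstein μ (Measure.map (⇑h) ν) < ε ∧
      (⨆ z : X, ‖(h z : ℂ) - (z : ℂ)‖) < infWasserstein μ ν + ε := by
  subst hX
  have : μ.IsOpenPosMeasure := ⟨fun U hU hne => (hμfaithful U hU hne).ne'⟩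
  have : ν.IsOpenPosMeasure := ⟨fun U hU hne => (hνfaithful U hU hne).ne'⟩
  have : NullSingletonClass μ := ⟨hμdiffuse⟩
  have : NullSingletonClass ν := ⟨hνdiffuse⟩
  obtain ⟨s, hs, hsr, hμν⟩ :=
    exists_forall_liftCDF_sub_le μ ν (lt_add_of_pos_right _ (half_pos hε))
  obtain ⟨H, c, hHc, hHs⟩ := CircleDeg1Lift.exists_unit_map_eq_add_abs_sub_le
    (isUnit_liftCDF μ).unit (isUnit_liftCDF ν).unit hμν
  refine ⟨circleHomeo H, circleHomeo_homotopic H, ?_, ?_⟩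
  · rw [map_circleHomeo_eq H c hHc, infWasserstein_self]
    exact hε
  · calc (⨆ z : S, ‖(circleHomeo H z : ℂ) - z‖) ≤ 2 * sin (π * s) :=
          ciSup_le fun z => (dist_eq_norm _ _).symm.trans_le (dist_circleHomeo_le H hs hHs z)
      _ < infWasserstein μ ν + ε := by linarith
end

section
/- Let X be an infinite compact metric space and let f : X → X be a continuous map that is topologically transitive (for all nonempty open sets U, V ⊆ X there exists n ∈ ℕ with f^[n](U) ∩ V ≠ ∅) and whose set of periodic points { x ∈ X : ∃ n ≥ 1, f^[n](x) = x } is dense in X. Then f has sensitive dependence on initial conditions: there exists δ > 0 such that for every x ∈ X and every ε > 0 there exist y ∈ X and n ∈ ℕ with dist(x, y) < ε and dist(f^[n](x), f^[n](y)) ≥ δ. -/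
open Function Metric

private lemma iter_fixed_mul' {X : Type*} (f : X → X) {p : X} {n : ℕ} (h : f^[n] p = p)
    (k : ℕ) : f^[n * k] p = p := by
  rw [Function.iterate_mul]
  exact Function.iterate_fixed h k

private lemma iter_mod' {X : Type*} (f : X → X) {p : X} {n : ℕ} (h : f^[n] p = p) (i : ℕ) :
    f^[i] p = f^[i % n] p := by
  conv_lhs => rw [← Nat.mod_add_div i n]
  rw [Function.iterate_add_apply, iter_fixed_mul' f h]

/-- Banks–Brooks–Cairns–Davis–Stacey: a topologically transitive continuous map of an
infinite compact metric space with a dense set of periodic points has sensitive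
dependence on initial conditions. -/
theorem sensitive_dependence_of_transitive_dense_periodic
    (X : Type*) [MetricSpace X] [CompactSpace X] [Infinite X]
    (f : X → X) (hf : Continuous f)
    (htrans : ∀ U V : Set X, IsOpen U → IsOpen V → U.Nonempty → V.Nonempty →
      ∃ n : ℕ, ((f^[n]) '' U ∩ V).Nonempty)
    (hper : Dense {x : X | ∃ n : ℕ, 1 ≤ n ∧ f^[n] x = x}) :
    ∃ δ > (0 : ℝ), ∀ x : X, ∀ ε > (0 : ℝ),
      ∃ (y : X) (n : ℕ), dist x y < ε ∧ δ ≤ dist (f^[n] x) (f^[n] y) := by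
  -- First periodic point
  obtain ⟨q1, hq1per, -⟩ := hper.exists_mem_open isOpen_univ Set.univ_nonempty
  obtain ⟨n1, hn1, hfix1⟩ := hq1per
  -- Its orbit is finite
  set S : Set X := Set.range (fun i => f^[i] q1) with hS
  have hSfin : S.Finite := by
    apply Set.Finite.subset ((Set.finite_Iio n1).image (fun i => f^[i] q1))
    rintro y ⟨i, rfl⟩
    exact ⟨i % n1, Nat.mod_lt _ hn1, (iter_mod' f hfix1 i).symm⟩
  -- Second periodic point, outside orbit of the first
  obtain ⟨q2, hq2per, hq2S⟩ := hper.exists_mem_open hSfin.isClosed.isOpen_compl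
    hSfin.infinite_compl.nonempty
  obtain ⟨n2, hn2, hfix2⟩ := hq2per
  -- Orbits are disjoint
  have hdisj : ∀ i j, f^[i] q1 ≠ f^[j] q2 := by
    intro i j heq
    apply hq2S
    have hjle : j ≤ n2 * j := Nat.le_mul_of_pos_left j hn2
    have : q2 = f^[n2 * j - j + i] q1 := by
      calc q2 = f^[n2 * j] q2 := (iter_fixed_mul' f hfix2 j).symm
        _ = f^[n2 * j - j + j] q2 := by rw [Nat.sub_add_cancel hjle]
        _ = f^[n2 * j - j] (f^[j] q2) := Function.iterate_add_apply f _ _ _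
        _ = f^[n2 * j - j] (f^[i] q1) := by rw [heq]
        _ = f^[n2 * j - j + i] q1 := (Function.iterate_add_apply f _ _ _).symm
    exact ⟨n2 * j - j + i, this.symm⟩
  -- Minimal distance between the two (finite) orbits
  set F : ℕ × ℕ → ℝ := fun pr => dist (f^[pr.1] q1) (f^[pr.2] q2) with hF
  have hprodne : ((Finset.range n1) ×ˢ (Finset.range n2)).Nonempty :=
    Finset.nonempty_product.mpr ⟨⟨0, Finset.mem_range.mpr hn1⟩, ⟨0, Finset.mem_range.mpr hn2⟩⟩
  set s : Finset ℝ := ((Finset.range n1) ×ˢ (Finset.range n2)).image F with hs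
  have hsne : s.Nonempty := hprodne.image F
  set δ₁ : ℝ := s.min' hsne with hδ₁
  have hδ₁pos : 0 < δ₁ := by
    obtain ⟨pr, -, hpr⟩ := Finset.mem_image.mp (s.min'_mem hsne)
    rw [hδ₁, ← hpr]
    exact dist_pos.mpr (hdisj pr.1 pr.2)
  have hδ₁le : ∀ i j, δ₁ ≤ dist (f^[i] q1) (f^[j] q2) := by
    intro i j
    rw [iter_mod' f hfix1 i, iter_mod' f hfix2 j]
    apply s.min'_le
    exact Finset.mem_image.mpr ⟨(i % n1, j % n2),
      Finset.mem_product.mpr ⟨Finset.mem_range.mpr (Nat.mod_lt _ hn1),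
        Finset.mem_range.mpr (Nat.mod_lt _ hn2)⟩, rfl⟩
  -- The sensitivity constant
  refine ⟨δ₁ / 8, by linarith, ?_⟩
  intro x ε hε
  set δ : ℝ := δ₁ / 8 with hδdef
  have hδpos : 0 < δ := by positivity
  -- a periodic point q whose whole orbit is at distance ≥ 4δ from x
  have key : ∃ q m, 1 ≤ m ∧ f^[m] q = q ∧ ∀ j, 4 * δ ≤ dist x (f^[j] q) := by
    by_cases h : ∀ j, δ₁ / 2 ≤ dist x (f^[j] q1)
    · exact ⟨q1, n1, hn1, hfix1, fun j => by linarith [h j]⟩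
    · push_neg at h
      obtain ⟨j1, hj1⟩ := h
      refine ⟨q2, n2, hn2, hfix2, fun j => ?_⟩
      have := hδ₁le j1 j
      have htri := dist_triangle_left (f^[j1] q1) (f^[j] q2) x
      linarith
  obtain ⟨q, nq, hnq, hfixq, hqfar⟩ := key
  set ε' : ℝ := min ε δ with hε'
  have hε'pos : 0 < ε' := lt_min hε hδpos
  -- periodic point p close to x
  obtain ⟨p, hpper, hpball⟩ := hper.exists_mem_open isOpen_ball ⟨x, mem_ball_self hε'pos⟩
  obtain ⟨n, hn, hfixp⟩ := hpper
  have hpx : dist p x < ε' := mem_ball.mp hpball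
  -- the open set V around the orbit of q
  set V : Set X := ⋂ i ∈ Finset.range (n + 1), f^[i] ⁻¹' Metric.ball (f^[i] q) δ with hV
  have hVopen : IsOpen V :=
    isOpen_biInter_finset fun i _ => isOpen_ball.preimage (hf.iterate i)
  have hqV : q ∈ V := by
    simp only [hV, Set.mem_iInter, Set.mem_preimage]
    intro i _
    exact mem_ball_self hδpos
  obtain ⟨k, w, ⟨z, hzU, hzw⟩, hwV⟩ := htrans (Metric.ball x ε') V isOpen_ball hVopen
    ⟨x, mem_ball_self hε'pos⟩ ⟨q, hqV⟩
  -- choose the multiple m of n with k < m ≤ k + n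
  set m : ℕ := n * (k / n + 1) with hm
  have hdm : n * (k / n) + k % n = k := Nat.div_add_mod k n
  have hmod : k % n < n := Nat.mod_lt _ hn
  have hm' : m = n * (k / n) + n := by rw [hm, Nat.mul_succ]
  have hkm : k < m := by omega
  have hmkn : m ≤ k + n := by
    have : n * (k / n) ≤ k := by omega
    omega
  set r : ℕ := m - k with hr
  have hrn : r ≤ n := by omega
  have hrk : r + k = m := by omega
  -- f^[m] fixes p
  have hfmp : f^[m] p = p := iter_fixed_mul' f hfixp _
  -- f^[m] z is δ-close to f^[r] q
  have hfmz : f^[m] z = f^[r] (f^[k] z) := by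
    rw [← hrk, Function.iterate_add_apply]
  have hzV : f^[k] z ∈ V := hzw ▸ hwV
  have hclose : dist (f^[m] z) (f^[r] q) < δ := by
    rw [hfmz]
    have := Set.mem_iInter₂.mp hzV r (Finset.mem_range.mpr (by omega))
    exact mem_ball.mp this
  -- distance estimates
  have hfar : 4 * δ ≤ dist x (f^[r] q) := hqfar r
  have hpδ : dist p x < δ := lt_of_lt_of_le hpx (min_le_right _ _)
  have htri4 : dist x (f^[r] q) ≤ dist x p + dist p (f^[m] z) + dist (f^[m] z) (f^[r] q) :=
    dist_triangle4 x p (f^[m] z) (f^[r] q)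
  have hxp : dist x p < δ := by rw [dist_comm]; exact hpδ
  have hmain : 2 * δ ≤ dist p (f^[m] z) := by linarith
  have htri : dist p (f^[m] z) ≤ dist (f^[m] x) p + dist (f^[m] x) (f^[m] z) := by
    rw [dist_comm (f^[m] x) p]
    exact dist_triangle p (f^[m] x) (f^[m] z)
  by_cases hc : δ ≤ dist (f^[m] x) (f^[m] p)
  · refine ⟨p, m, ?_, hc⟩
    rw [dist_comm]
    exact lt_of_lt_of_le hpx (min_le_left _ _)
  · refine ⟨z, m, ?_, ?_⟩
    · have : dist z x < ε' := mem_ball.mp hzU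
      rw [dist_comm]
      exact lt_of_lt_of_le this (min_le_left _ _)
    · push_neg at hc
      rw [hfmp] at hc
      linarith
end

section
/- Let X be a nonempty compact metric space, let A be a unital C*-algebra, and let φ, ψ : C(X, ℂ) → A be unital *-homomorphisms. Then the following are equivalent: (i) for every ε > 0 there exists a unitary u ∈ A such that ‖φ(f) − u·ψ(f)·u*‖ ≤ ε for every 1-Lipschitz function f : X → ℝ (viewed as an element of C(X, ℂ)), with the same u for all such f simultaneously; (ii) φ and ψ are approximately unitarily equivalent, i.e. for every ε > 0 and every finite set F ⊆ C(X, ℂ) there exists a unitary u ∈ A such that ‖φ(g) − u·ψ(g)·u*‖ < ε for every g ∈ F. -/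
/-!
Write `D_u(b) = φ b - u ψ(b) u*` for a unitary `u`. Since `D_u(bc) = D_u(b) φ(c) + u ψ(b) u* D_u(c)`
and `D_u(b*) = D_u(b)*`, along any filter of unitaries the set of `b` with `D_u(b) → 0` is a
*-subalgebra, and it is closed because all `D_u` are `2`-Lipschitz. For (i) ⇒ (ii), take the
filter of unitaries that conjugate every `1`-Lipschitz function up to `η`, `η → 0`: the subalgebra
contains the `1`-Lipschitz functions, which separate points, so by Stone–Weierstrass it is all of
`C(X)`. For (ii) ⇒ (i), `D_u` kills constants, and the `1`-Lipschitz functions vanishing at a base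
point form a totally bounded set (Arzelà–Ascoli), so a finite net of them controls all of them.
-/

open Filter Topology
open scoped NNReal

def lipToC {X : Type*} [MetricSpace X] (f : X → ℝ) (hf : LipschitzWith 1 f) :
    C(X, ℂ) :=
  ⟨fun x => (f x : ℂ), Complex.continuous_ofReal.comp hf.continuous⟩

section ConjDefect

variable {B A : Type*} [Ring B] [StarRing B] [Algebra ℂ B] [Ring A] [StarRing A] [Algebra ℂ A]

def conjDefect (φ ψ : B →⋆ₐ[ℂ] A) (u : A) (b : B) : A := φ b - u * ψ b * star u

variable (φ ψ : B →⋆ₐ[ℂ] A) {u : A}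

lemma conjDefect_add (u : A) (b c : B) :
    conjDefect φ ψ u (b + c) = conjDefect φ ψ u b + conjDefect φ ψ u c := by
  simp only [conjDefect, map_add, mul_add, add_mul]; abel

lemma conjDefect_sub (u : A) (b c : B) :
    conjDefect φ ψ u (b - c) = conjDefect φ ψ u b - conjDefect φ ψ u c := by
  simp only [conjDefect, map_sub, mul_sub, sub_mul]; abel

lemma conjDefect_smul (u : A) (z : ℂ) (b : B) :
    conjDefect φ ψ u (z • b) = z • conjDefect φ ψ u b := by
  simp only [conjDefect, map_smul, mul_smul_comm, smul_mul_assoc, smul_sub]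

lemma conjDefect_star (u : A) (b : B) :
    conjDefect φ ψ u (star b) = star (conjDefect φ ψ u b) := by
  simp only [conjDefect, map_star, star_sub, star_mul, star_star, mul_assoc]

lemma conjDefect_algebraMap (hu : u ∈ unitary A) (z : ℂ) :
    conjDefect φ ψ u (algebraMap ℂ B z) = 0 := by
  rw [Algebra.algebraMap_eq_smul_one, conjDefect_smul, conjDefect, map_one, map_one, mul_one,
    Unitary.mul_star_self_of_mem hu, sub_self, smul_zero]

lemma conjDefect_mul (hu : u ∈ unitary A) (b c : B) :
    conjDefect φ ψ u (b * c) =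
      conjDefect φ ψ u b * φ c + u * ψ b * star u * conjDefect φ ψ u c := by
  have hconj : u * ψ b * star u * (u * ψ c * star u) = u * ψ (b * c) * star u := by
    rw [map_mul, show u * ψ b * star u * (u * ψ c * star u) = u * ψ b * (star u * u) * ψ c * star u
      by noncomm_ring, Unitary.star_mul_self_of_mem hu, mul_one, mul_assoc u]
  simp only [conjDefect, mul_sub, sub_mul, hconj, map_mul]; abel

end ConjDefect

lemma norm_unitary_mul_mul_star {A : Type*} [NormedRing A] [StarRing A] [CStarRing A] {u : A}
    (hu : u ∈ unitary A) (a : A) : ‖u * a * star u‖ = ‖a‖ := by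
  rw [CStarRing.norm_mul_mem_unitary _ (Unitary.star_mem hu), CStarRing.norm_mem_unitary_mul _ hu]

section AsymptoticEqualizer

variable {B A : Type*} [Ring B] [StarRing B] [Algebra ℂ B]
  [NormedRing A] [StarRing A] [Algebra ℂ A] (φ ψ : B →⋆ₐ[ℂ] A)

-- For `S` the `1`-Lipschitz functions, this filter is nontrivial iff `d_U(φ, ψ) = 0`.
def almostConjugatingFilter (S : Set B) : Filter (unitary A) :=
  ⨅ η ∈ Set.Ioi (0 : ℝ), 𝓟 {u | ∀ s ∈ S, ‖conjDefect φ ψ u s‖ ≤ η}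

lemma almostConjugatingFilter_hasBasis (S : Set B) :
    (almostConjugatingFilter φ ψ S).HasBasis (fun η : ℝ => 0 < η)
      fun η => {u | ∀ s ∈ S, ‖conjDefect φ ψ u s‖ ≤ η} :=
  hasBasis_biInf_principal
    (fun _ ha _ hb => ⟨_, Set.mem_Ioi.2 (lt_min ha hb),
      fun _ hu s hs => (hu s hs).trans (min_le_left _ _),
      fun _ hu s hs => (hu s hs).trans (min_le_right _ _)⟩)
    Set.nonempty_Ioi

variable [StarModule ℂ B] [CStarRing A]

def asymptoticEqualizer (l : Filter (unitary A)) : StarSubalgebra ℂ B where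
  carrier := {b | Tendsto (fun u : unitary A => conjDefect φ ψ u b) l (𝓝 0)}
  add_mem' {b c} hb hc := by
    simpa only [Set.mem_ofPred_eq, conjDefect_add, add_zero] using hb.add hc
  mul_mem' {b c} hb hc := by
    have hbounded :
        IsBoundedUnder (· ≤ ·) l (norm ∘ fun u : unitary A => (u : A) * ψ b * star (u : A)) :=
      isBoundedUnder_of ⟨‖ψ b‖, fun u => (norm_unitary_mul_mul_star u.2 _).le⟩
    simpa only [Set.mem_ofPred_eq, conjDefect_mul φ ψ (Subtype.prop _), zero_mul, zero_add]
      using (hb.mul_const (φ c)).add (isBoundedUnder_le_mul_tendsto_zero hbounded hc)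
  algebraMap_mem' z := by
    simp only [Set.mem_ofPred_eq, conjDefect_algebraMap φ ψ (Subtype.prop _), tendsto_const_nhds]
  star_mem' {b} hb := by
    simpa only [Set.mem_ofPred_eq, conjDefect_star, star_zero] using hb.star

lemma subset_asymptoticEqualizer_almostConjugatingFilter (S : Set B) :
    S ⊆ asymptoticEqualizer φ ψ (almostConjugatingFilter φ ψ S) := fun s hs =>
  (almostConjugatingFilter_hasBasis φ ψ S).tendsto_iff Metric.nhds_basis_closedBall |>.2
    fun ε hε => ⟨ε, hε, fun _ hu => mem_closedBall_zero_iff.2 (hu s hs)⟩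

end AsymptoticEqualizer

section CStarAlgebra

variable {B A : Type*} [CStarAlgebra B]
  [NormedRing A] [StarRing A] [CStarRing A] [CompleteSpace A] [NormedAlgebra ℂ A] [StarModule ℂ A]

lemma norm_starAlgHom_apply_le (φ : B →⋆ₐ[ℂ] A) (b : B) : ‖φ b‖ ≤ ‖b‖ :=
  letI : CStarAlgebra A := {}
  NonUnitalStarAlgHom.norm_apply_le φ b

variable (φ ψ : B →⋆ₐ[ℂ] A)

lemma lipschitzWith_conjDefect {u : A} (hu : u ∈ unitary A) :
    LipschitzWith 2 (conjDefect φ ψ u) := by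
  refine LipschitzWith.of_dist_le_mul fun b c => ?_
  simp only [dist_eq_norm, ← conjDefect_sub]
  calc ‖φ (b - c) - u * ψ (b - c) * star u‖
      ≤ ‖φ (b - c)‖ + ‖ψ (b - c)‖ := by
        rw [← norm_unitary_mul_mul_star hu (ψ (b - c))]
        exact norm_sub_le _ _
    _ ≤ 2 * ‖b - c‖ := by
        linarith [norm_starAlgHom_apply_le φ (b - c), norm_starAlgHom_apply_le ψ (b - c)]

lemma uniformEquicontinuous_conjDefect :
    UniformEquicontinuous fun u : unitary A => conjDefect φ ψ u :=
  LipschitzWith.uniformEquicontinuous _ 2 fun u => lipschitzWith_conjDefect φ ψ u.2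

lemma isClosed_asymptoticEqualizer (l : Filter (unitary A)) :
    IsClosed (asymptoticEqualizer φ ψ l : Set B) :=
  (uniformEquicontinuous_conjDefect φ ψ).equicontinuous.isClosed_setOfPred_tendsto
    continuous_const

theorem exists_unitary_forall_finset_of_topologicalClosure_adjoin_eq_top (S : Set B)
    (hS : (StarAlgebra.adjoin ℂ S).topologicalClosure = ⊤)
    (h : ∀ η > (0 : ℝ), ∃ u ∈ unitary A, ∀ s ∈ S, ‖conjDefect φ ψ u s‖ ≤ η)
    {ε : ℝ} (hε : 0 < ε) (F : Finset B) :
    ∃ u ∈ unitary A, ∀ b ∈ F, ‖conjDefect φ ψ u b‖ < ε := by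
  set l := almostConjugatingFilter φ ψ S
  have : l.NeBot := (almostConjugatingFilter_hasBasis φ ψ S).neBot_iff.2 fun hη =>
    let ⟨u, hu, huS⟩ := h _ hη; ⟨⟨u, hu⟩, huS⟩
  have hmem : ∀ b, b ∈ asymptoticEqualizer φ ψ l := by
    rw [← StarSubalgebra.eq_top_iff, eq_top_iff, ← hS]
    exact StarSubalgebra.topologicalClosure_minimal
      (StarAlgebra.adjoin_le (subset_asymptoticEqualizer_almostConjugatingFilter φ ψ S))
      (isClosed_asymptoticEqualizer φ ψ l)
  obtain ⟨u, hu⟩ := ((eventually_all_finset F).2 fun b _ =>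
    (hmem b).norm.eventually (gt_mem_nhds (by simpa using hε))).exists
  exact ⟨u, u.2, hu⟩

end CStarAlgebra

lemma exists_forall_norm_lt_of_totallyBounded {ι V W : Type*} [PseudoMetricSpace V]
    [SeminormedAddCommGroup W] {D : ι → V → W} (hD : UniformEquicontinuous D) {T : Set V}
    (hT : TotallyBounded T) (h : ∀ ε > (0 : ℝ), ∀ F : Finset V, ∃ i, ∀ v ∈ F, ‖D i v‖ < ε)
    {ε : ℝ} (hε : 0 < ε) : ∃ i, ∀ v ∈ T, ‖D i v‖ < ε := by
  obtain ⟨δ, hδ, hDδ⟩ := Metric.uniformEquicontinuous_iff.mp hD (ε / 2) (half_pos hε)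
  obtain ⟨t, ht, hTt⟩ := Metric.totallyBounded_iff.mp hT δ hδ
  obtain ⟨i, hi⟩ := h (ε / 2) (half_pos hε) ht.toFinset
  refine ⟨i, fun v hv => ?_⟩
  obtain ⟨w, hw, hvw⟩ := Set.mem_iUnion₂.mp (hTt hv)
  calc ‖D i v‖ ≤ ‖D i w‖ + dist (D i v) (D i w) := by
        rw [dist_eq_norm]; exact norm_le_norm_add_norm_sub' _ _
    _ < ε / 2 + ε / 2 := add_lt_add (hi w (ht.mem_toFinset.2 hw)) (hDδ v w hvw i)
    _ = ε := add_halves ε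

lemma totallyBounded_setOf_lipschitzWith {X E : Type*} [PseudoMetricSpace X] [CompactSpace X]
    [NormedAddCommGroup E] [ProperSpace E] (K : ℝ≥0) (x₀ : X) :
    TotallyBounded {g : C(X, E) | LipschitzWith K g ∧ g x₀ = 0} := by
  set e := ContinuousMap.isometryEquivBoundedOfCompact X E
  rw [← totallyBounded_image_iff e.isometry.isUniformInducing]
  refine (BoundedContinuousFunction.arzela_ascoli
    (Metric.closedBall 0 (K * Metric.diam (Set.univ : Set X)))
    (isCompact_closedBall 0 _) _ ?_ ?_).totallyBounded.subset subset_closure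
  · rintro _ x ⟨g, ⟨hg, hg₀⟩, rfl⟩
    rw [Metric.mem_closedBall, ← hg₀]
    exact (hg.dist_le_mul x x₀).trans <| by
      gcongr; exact Metric.dist_le_diam_of_mem isCompact_univ.isBounded trivial trivial
  · refine (LipschitzWith.uniformEquicontinuous _ K ?_).equicontinuous
    rintro ⟨_, g, ⟨hg, -⟩, rfl⟩
    exact hg

lemma topologicalClosure_adjoin_range_lipToC (X : Type*) [MetricSpace X] [CompactSpace X] :
    (StarAlgebra.adjoin ℂ
      (Set.range fun f : {f : X → ℝ // LipschitzWith 1 f} => lipToC f.1 f.2)).topologicalClosure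
      = ⊤ :=
  ContinuousMap.starSubalgebra_topologicalClosure_eq_top_of_separatesPoints _ fun _ _ hxy => by
    obtain ⟨f, hf, hfxy⟩ := Set.separatesPoints_lipschitzWith_one X hxy
    exact ⟨_, ⟨lipToC f hf, StarAlgebra.subset_adjoin ℂ _ ⟨⟨f, hf⟩, rfl⟩, rfl⟩,
      by simpa [lipToC] using hfxy⟩

lemma lipToC_sub_algebraMap_mem {X : Type*} [MetricSpace X] {f : X → ℝ}
    (hf : LipschitzWith 1 f) (x₀ : X) :
    lipToC f hf - algebraMap ℂ C(X, ℂ) (f x₀) ∈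
      {g : C(X, ℂ) | LipschitzWith 1 g ∧ g x₀ = 0} := by
  refine ⟨LipschitzWith.of_dist_le_mul fun x y => ?_, by simp [lipToC]⟩
  simpa [lipToC, dist_eq_norm, ← Complex.ofReal_sub, Real.dist_eq] using hf.dist_le_mul x y

/-- For unital *-homomorphisms `φ, ψ : C(X) → A`, the unitary distance computed over
`1`-Lipschitz functions vanishes if and only if `φ` and `ψ` are approximately
unitarily equivalent. -/
theorem unitary_distance_zero_iff_approx_unitarily_equivalent
    (X : Type*) [MetricSpace X] [CompactSpace X] [Nonempty X]
    (A : Type*) [NormedRing A] [StarRing A] [CStarRing A] [CompleteSpace A]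
    [NormedAlgebra ℂ A] [StarModule ℂ A]
    (φ ψ : C(X, ℂ) →⋆ₐ[ℂ] A) :
    (∀ ε > (0 : ℝ), ∃ u ∈ unitary A,
        ∀ (f : X → ℝ) (hf : LipschitzWith 1 f),
          ‖φ (lipToC f hf) - u * ψ (lipToC f hf) * star u‖ ≤ ε) ↔
      (∀ ε > (0 : ℝ), ∀ F : Finset C(X, ℂ), ∃ u ∈ unitary A,
        ∀ g ∈ F, ‖φ g - u * ψ g * star u‖ < ε) := by
  constructor
  · intro h ε hε F
    refine exists_unitary_forall_finset_of_topologicalClosure_adjoin_eq_top φ ψ _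
      (topologicalClosure_adjoin_range_lipToC X) (fun η hη => ?_) hε F
    obtain ⟨u, hu, hη⟩ := h η hη
    exact ⟨u, hu, Set.forall_mem_range.2 fun f => hη f.1 f.2⟩
  · intro h ε hε
    obtain ⟨x₀⟩ := ‹Nonempty X›
    obtain ⟨u, hu⟩ := exists_forall_norm_lt_of_totallyBounded
      (uniformEquicontinuous_conjDefect φ ψ) (totallyBounded_setOf_lipschitzWith 1 x₀)
      (fun ε hε F => let ⟨u, hu, hF⟩ := h ε hε F; ⟨⟨u, hu⟩, hF⟩) hε
    refine ⟨u, u.2, fun f hf => le_of_lt ?_⟩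
    have hf₀ := hu _ (lipToC_sub_algebraMap_mem hf x₀)
    rwa [conjDefect_sub, conjDefect_algebraMap φ ψ u.2, sub_zero] at hf₀
end

section
/- Let X be a compact metric space and let N ∈ ℕ. Then the following are equivalent: (i) every finite open cover 𝒲 of X admits a finite open refinement 𝒱 covering X such that no N+2 distinct members of 𝒱 have a common point; (ii) every finite open cover 𝒲 of X admits a finite N-decomposable open refinement, i.e. a finite open cover (U_i)_{i ∈ I} refining 𝒲 together with a partition of the index set I into N+1 classes I_0, …, I_N such that U_{i₁} ∩ U_{i₂} = ∅ for every pair of distinct indices i₁, i₂ lying in the same class I_k. -/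
open Set

/-- Core lemma: a finite open cover of order ≤ N+1 of a (metric) compact space admits a
finite N-decomposable open refinement. -/
lemma aux_decomposable
    (X : Type*) [MetricSpace X] (N : ℕ) (V : Finset (Set X))
    (hVo : ∀ v ∈ V, IsOpen v) (hVcov : ⋃₀ (V : Set (Set X)) = Set.univ)
    (hord : ∀ T : Finset (Set X), T ⊆ V → N + 2 ≤ T.card → ⋂₀ (T : Set (Set X)) = ∅) :
    ∃ (I : Finset ℕ) (U : ℕ → Set X) (c : ℕ → Fin (N + 1)),
      (∀ i ∈ I, IsOpen (U i)) ∧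
      (⋃ i ∈ I, U i) = Set.univ ∧
      (∀ i ∈ I, ∃ v ∈ V, U i ⊆ v) ∧
      ∀ i ∈ I, ∀ j ∈ I, i ≠ j → c i = c j → U i ∩ U j = ∅ := by
  classical
  set ι := {v : Set X // v ∈ V}
  obtain ⟨f, hf⟩ := BumpCovering.exists_isSubordinate (s := (Set.univ : Set X))
    isClosed_univ (fun i : ι => (i : Set X)) (fun i => hVo i i.2)
    (by
      intro x _
      have hx : x ∈ ⋃₀ (V : Set (Set X)) := by rw [hVcov]; trivial
      obtain ⟨v, hv, hxv⟩ := hx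
      exact mem_iUnion.2 ⟨⟨v, hv⟩, hxv⟩)
  -- key facts about f
  have key1 : ∀ (i : ι) (x : X), 0 < f i x → x ∈ (i : Set X) := by
    intro i x hx
    exact hf i (subset_tsupport _ (by simp [Function.mem_support]; positivity))
  have key2 : ∀ x : X, ∃ i : ι, f i x = 1 := by
    intro x
    obtain ⟨i, hi⟩ := f.eventuallyEq_one' x (mem_univ x)
    exact ⟨i, hi.eq_of_nhds⟩
  -- the sets U_S
  set US : Finset ι → Set X := fun S =>
    {x | ∀ i ∈ S, 0 < f i x ∧ ∀ j, j ∉ S → f j x < f i x} with hUS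
  have hUSopen : ∀ S, IsOpen (US S) := by
    intro S
    have : US S = ⋂ i ∈ S, ({x | 0 < f i x} ∩ ⋂ j ∈ Sᶜ, {x | f j x < f i x}) := by
      ext x
      simp only [hUS, mem_setOf_eq, mem_iInter, mem_inter_iff, Finset.mem_compl]
      try tauto
    rw [this]
    refine isOpen_biInter_finset fun i _ => ?_
    exact (isOpen_lt continuous_const (f i).continuous).inter
      (isOpen_biInter_finset fun j _ => isOpen_lt (f j).continuous (f i).continuous)
  have hcov : ∀ x : X, ∃ S : Finset ι, S.Nonempty ∧ x ∈ US S := by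
    intro x
    obtain ⟨i₀, hi₀⟩ := key2 x
    refine ⟨Finset.univ.filter (fun i => ∀ j, f j x ≤ f i x), ⟨i₀, ?_⟩, ?_⟩
    · simp only [Finset.mem_filter, Finset.mem_univ, true_and]
      intro j; rw [hi₀]; exact f.le_one j x
    · intro i hi
      simp only [Finset.mem_filter, Finset.mem_univ, true_and] at hi
      constructor
      · have := hi i₀; rw [hi₀] at this; linarith
      · intro j hj
        simp only [Finset.mem_filter, Finset.mem_univ, true_and, not_forall, not_le] at hj
        obtain ⟨k, hk⟩ := hj
        exact lt_of_lt_of_le hk (hi k)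
  have hsub : ∀ S : Finset ι, S.Nonempty → ∃ v ∈ V, US S ⊆ v := by
    intro S ⟨i, hi⟩
    exact ⟨i, i.2, fun x hx => key1 i x (hx i hi).1⟩
  have hempty : ∀ S : Finset ι, N + 2 ≤ S.card → US S = ∅ := by
    intro S hS
    have hinj : Set.InjOn (fun i : ι => (i : Set X)) S := fun a _ b _ h => Subtype.ext h
    have hcard : (S.image (fun i : ι => (i : Set X))).card = S.card :=
      Finset.card_image_of_injOn hinj
    have hT := hord (S.image (fun i : ι => (i : Set X)))
      (fun v hv => by
        obtain ⟨i, _, rfl⟩ := Finset.mem_image.1 hv; exact i.2)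
      (hcard ▸ hS)
    ext x
    simp only [mem_empty_iff_false, iff_false]
    intro hx
    have : x ∈ ⋂₀ ((S.image (fun i : ι => (i : Set X)) : Finset (Set X)) : Set (Set X)) := by
      intro v hv
      obtain ⟨i, hi, rfl⟩ := Finset.mem_image.1 hv
      exact key1 i x (hx i hi).1
    rw [hT] at this
    exact this
  have hdisj : ∀ S S' : Finset ι, S ≠ S' → S.card = S'.card → US S ∩ US S' = ∅ := by
    intro S S' hne hcard
    have h1 : (S \ S').Nonempty := by
      rw [Finset.sdiff_nonempty]
      intro h
      exact hne (Finset.eq_of_subset_of_card_le h (le_of_eq hcard.symm))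
    have h2 : (S' \ S).Nonempty := by
      rw [Finset.sdiff_nonempty]
      intro h
      exact hne (Finset.eq_of_subset_of_card_le h (le_of_eq hcard)).symm
    obtain ⟨i, hi⟩ := h1
    obtain ⟨j, hj⟩ := h2
    rw [Finset.mem_sdiff] at hi hj
    ext x
    simp only [mem_inter_iff, mem_empty_iff_false, iff_false, not_and]
    intro hxS hxS'
    have h3 := (hxS i hi.1).2 j hj.2
    have h4 := (hxS' j hj.1).2 i hi.2
    linarith
  -- enumeration
  set SS : Finset (Finset ι) := Finset.univ.filter (fun S => S.Nonempty) with hSS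
  set L : List (Finset ι) := SS.toList with hL
  set g : ℕ → Finset ι := fun k => L.getD k ∅ with hg
  have hgmem : ∀ k ∈ Finset.range L.length, g k ∈ SS := by
    intro k hk
    rw [Finset.mem_range] at hk
    rw [hg]
    simp only [List.getD_eq_getElem?_getD, List.getElem?_eq_getElem hk, Option.getD_some]
    exact (Finset.mem_toList).1 (List.getElem_mem _)
  have hgne : ∀ S ∈ SS, S.Nonempty := fun S hS => (Finset.mem_filter.1 hS).2
  have hginj : ∀ k ∈ Finset.range L.length, ∀ l ∈ Finset.range L.length,
      k ≠ l → g k ≠ g l := by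
    intro k hk l hl hkl
    rw [Finset.mem_range] at hk hl
    rw [hg]
    simp only [List.getD_eq_getElem?_getD, List.getElem?_eq_getElem hk,
      List.getElem?_eq_getElem hl, Option.getD_some]
    intro h
    exact hkl (SS.nodup_toList.getElem_inj_iff.1 h)
  refine ⟨Finset.range L.length, fun k => US (g k),
    fun k => ⟨min ((g k).card - 1) N, Nat.lt_succ_of_le (min_le_right _ _)⟩,
    fun k _ => hUSopen _, ?_, fun k hk => hsub _ (hgne _ (hgmem k hk)), ?_⟩
  · ext x
    simp only [mem_iUnion, mem_univ, iff_true, Finset.mem_range]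
    obtain ⟨S, hSne, hxS⟩ := hcov x
    have : S ∈ L := Finset.mem_toList.2 (by simp [hSS, hSne])
    obtain ⟨k, hk, hks⟩ := List.mem_iff_getElem.1 this
    refine ⟨k, hk, ?_⟩
    have : g k = S := by
      rw [hg]
      simp [List.getD_eq_getElem?_getD, List.getElem?_eq_getElem hk, hks]
    rw [this]; exact hxS
  · intro k hk l hl hkl hc
    have hSne : g k ≠ g l := hginj k hk l hl hkl
    have hk1 : 1 ≤ (g k).card := Finset.card_pos.2 (hgne _ (hgmem k hk))
    have hl1 : 1 ≤ (g l).card := Finset.card_pos.2 (hgne _ (hgmem l hl))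
    have hcc : min ((g k).card - 1) N = min ((g l).card - 1) N := by
      simpa [Fin.ext_iff] using hc
    have : (g k).card = (g l).card ∨ N + 2 ≤ (g k).card ∨ N + 2 ≤ (g l).card := by omega
    show US (g k) ∩ US (g l) = ∅
    rcases this with h | h | h
    · exact hdisj _ _ hSne h
    · rw [hempty _ h]; exact empty_inter _
    · rw [hempty _ h]; exact inter_empty _



/-- Two characterisations of 'Lebesgue covering dimension ≤ N' for a compact metric
space: every finite open cover admits a finite open refinement of order at most
`N + 1` (no `N + 2` distinct members share a common point) if and only if every
finite open cover admits a finite `N`-decomposable open refinement (one that can be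
coloured with `N + 1` colours so that sets of the same colour are pairwise disjoint). -/
theorem covering_dimension_iff_decomposable_refinement
    (X : Type*) [MetricSpace X] [CompactSpace X] (N : ℕ) :
    (∀ W : Finset (Set X), (∀ w ∈ W, IsOpen w) → ⋃₀ (W : Set (Set X)) = Set.univ →
        ∃ V : Finset (Set X), (∀ v ∈ V, IsOpen v) ∧
          ⋃₀ (V : Set (Set X)) = Set.univ ∧
          (∀ v ∈ V, ∃ w ∈ W, v ⊆ w) ∧
          ∀ T : Finset (Set X), T ⊆ V → N + 2 ≤ T.card →
            ⋂₀ (T : Set (Set X)) = ∅) ↔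
      (∀ W : Finset (Set X), (∀ w ∈ W, IsOpen w) → ⋃₀ (W : Set (Set X)) = Set.univ →
        ∃ (I : Finset ℕ) (U : ℕ → Set X) (c : ℕ → Fin (N + 1)),
          (∀ i ∈ I, IsOpen (U i)) ∧
          (⋃ i ∈ I, U i) = Set.univ ∧
          (∀ i ∈ I, ∃ w ∈ W, U i ⊆ w) ∧
          ∀ i ∈ I, ∀ j ∈ I, i ≠ j → c i = c j → U i ∩ U j = ∅) := by
  classical
  constructor
  · intro h W hWo hWcov
    obtain ⟨V, hVo, hVcov, hVref, hord⟩ := h W hWo hWcov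
    obtain ⟨I, U, c, h1, h2, h3, h4⟩ := aux_decomposable X N V hVo hVcov hord
    refine ⟨I, U, c, h1, h2, fun i hi => ?_, h4⟩
    obtain ⟨v, hv, hUv⟩ := h3 i hi
    obtain ⟨w, hw, hvw⟩ := hVref v hv
    exact ⟨w, hw, hUv.trans hvw⟩
  · intro h W hWo hWcov
    obtain ⟨I, U, c, h1, h2, h3, h4⟩ := h W hWo hWcov
    refine ⟨I.image U, fun v hv => ?_, ?_, fun v hv => ?_, ?_⟩
    · obtain ⟨i, hi, rfl⟩ := Finset.mem_image.1 hv; exact h1 i hi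
    · rw [Finset.coe_image, Set.sUnion_image]; exact h2
    · obtain ⟨i, hi, rfl⟩ := Finset.mem_image.1 hv; exact h3 i hi
    · intro T hT hTc
      ext x
      simp only [Set.mem_empty_iff_false, iff_false]
      intro hx
      -- choose an index for each member of T
      have hidx : ∀ t ∈ T, ∃ i ∈ I, U i = t := by
        intro t ht
        obtain ⟨i, hi, rfl⟩ := Finset.mem_image.1 (hT ht)
        exact ⟨i, hi, rfl⟩
      choose idx hidxI hidxU using hidx
      have hmaps : ∀ t ∈ T.attach, c (idx t t.2) ∈ (Finset.univ : Finset (Fin (N+1))) :=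
        fun _ _ => Finset.mem_univ _
      have hcard : (Finset.univ : Finset (Fin (N+1))).card < T.attach.card := by
        simp only [Finset.card_univ, Fintype.card_fin, Finset.card_attach]
        omega
      obtain ⟨t, _, t', _, htne, hct⟩ :=
        Finset.exists_ne_map_eq_of_card_lt_of_maps_to hcard hmaps
      have hUne : idx t t.2 ≠ idx t' t'.2 := by
        intro hh
        apply htne
        apply Subtype.ext
        rw [← hidxU t t.2, ← hidxU t' t'.2, hh]
      have := h4 _ (hidxI t t.2) _ (hidxI t' t'.2) hUne hct
      have hxt : x ∈ U (idx t t.2) := by rw [hidxU t t.2]; exact hx _ t.2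
      have hxt' : x ∈ U (idx t' t'.2) := by rw [hidxU t' t'.2]; exact hx _ t'.2
      have : x ∈ U (idx t t.2) ∩ U (idx t' t'.2) := ⟨hxt, hxt'⟩
      rw [h4 _ (hidxI t t.2) _ (hidxI t' t'.2) hUne hct] at this
      exact this
end

section
/- Let n ≥ 1 and let α, β : Fin n → ℂ. Then min over all permutations σ of Fin n of max_{i} |α(i) − β(σ(i))| equals inf { r > 0 : for every open set U ⊆ ℂ, the number of indices i with α(i) ∈ U is at most the number of indices j with β(j) ∈ U_r, and the number of indices i with β(i) ∈ U is at most the number of indices j with α(j) ∈ U_r }, where U_r = { z ∈ ℂ : dist(z, U) < r } is the open r-neighbourhood of U. -/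
/-!
A permutation `σ` with `dist (α i) (β (σ i)) < r` for all `i` transports the points of `α` in
`U` injectively to points of `β` in the `r`-thickening of `U`, which gives one inequality.
Conversely, if the counting condition holds for `r`, then for every `ε > 0` and every set `A`
of indices, taking `U` to be the union of the `ε`-balls around the points `α i`, `i ∈ A`, shows
that at least `#A` indices `j` have `β j` within `r + ε` of some `α i`, `i ∈ A`. This is Hall's
condition, so Hall's marriage theorem yields a permutation of cost at most `r + ε`.
-/

open Function Metric Set

theorem csInf_setOf_pos_and_eq {δ : ℝ} {P : ℝ → Prop} (hδ : 0 ≤ δ) (hP : ∀ r, δ < r → P r)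
    (hle : ∀ r, 0 < r → P r → δ ≤ r) : sInf {r | 0 < r ∧ P r} = δ := by
  refine csInf_eq_of_forall_ge_of_forall_gt_exists_lt ⟨δ + 1, by linarith, hP _ (by linarith)⟩
    (fun r hr ↦ hle r hr.1 hr.2) fun w hw ↦ ?_
  obtain ⟨r, hδr, hrw⟩ := exists_between hw
  exact ⟨r, ⟨hδ.trans_lt hδr, hP r hδr⟩, hrw⟩

section MatchingDist

variable {X ι κ : Type*} [PseudoMetricSpace X]

noncomputable def matchingDist (α β : ι → X) : ℝ :=
  ⨅ σ : Equiv.Perm ι, ⨆ i, dist (α i) (β (σ i))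

theorem matchingDist_nonneg (α β : ι → X) : 0 ≤ matchingDist α β :=
  le_ciInf fun _ ↦ Real.iSup_nonneg fun _ ↦ dist_nonneg

theorem matchingDist_le_of_forall_dist_le [Finite ι] {α β : ι → X} {r : ℝ} (hr : 0 ≤ r)
    (σ : Equiv.Perm ι) (h : ∀ i, dist (α i) (β (σ i)) ≤ r) : matchingDist α β ≤ r :=
  (ciInf_le (Finite.bddBelow_range _) σ).trans (Real.iSup_le h hr)

theorem exists_perm_forall_dist_lt_of_matchingDist_lt [Finite ι] {α β : ι → X} {r : ℝ}
    (h : matchingDist α β < r) : ∃ σ : Equiv.Perm ι, ∀ i, dist (α i) (β (σ i)) < r := by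
  obtain ⟨σ, hσ⟩ := exists_lt_of_ciInf_lt h
  exact ⟨σ, fun i ↦ (le_ciSup (Finite.bddAbove_range _) i).trans_lt hσ⟩

theorem ncard_le_ncard_thickening_of_injective [Finite κ] {α : ι → X} {β : κ → X} {f : ι → κ}
    (hf : Injective f) {r : ℝ} (h : ∀ i, dist (α i) (β (f i)) < r) (U : Set X) :
    {i | α i ∈ U}.ncard ≤ {j | β j ∈ thickening r U}.ncard :=
  ncard_le_ncard_of_injOn f
    (fun i hi ↦ mem_thickening_iff.mpr ⟨α i, hi, by rw [dist_comm]; exact h i⟩)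
    hf.injOn

theorem exists_injective_forall_dist_lt_of_ncard_le_ncard_thickening [Finite ι] [Finite κ]
    {α : ι → X} {β : κ → X} {r ε : ℝ} (hε : 0 < ε)
    (h : ∀ U : Set X, IsOpen U → {i | α i ∈ U}.ncard ≤ {j | β j ∈ thickening r U}.ncard) :
    ∃ f : ι → κ, Injective f ∧ ∀ i, dist (α i) (β (f i)) < r + ε := by
  classical
  have := Fintype.ofFinite κ
  let near (i : ι) : Finset κ := {j | dist (α i) (β j) < r + ε}
  suffices hall : ∀ A : Finset ι, A.card ≤ (A.biUnion near).card by
    obtain ⟨f, hf, hnear⟩ := (Finset.all_card_le_biUnion_card_iff_exists_injective near).mp hall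
    exact ⟨f, hf, fun i ↦ by simpa [near] using hnear i⟩
  intro A
  let U := ⋃ i ∈ A, ball (α i) ε
  have hA : (A : Set ι) ⊆ {i | α i ∈ U} := fun i hi ↦ mem_biUnion hi (mem_ball_self hε)
  have hnear : {j | β j ∈ thickening r U} ⊆ A.biUnion near := by
    intro j hj
    obtain ⟨z, hz, hjz⟩ := mem_thickening_iff.mp hj
    obtain ⟨i, hi, hzi⟩ := mem_iUnion₂.mp hz
    simp only [Finset.coe_biUnion, mem_iUnion, Finset.mem_coe]
    refine ⟨i, hi, Finset.mem_filter.mpr ⟨Finset.mem_univ _, ?_⟩⟩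
    calc dist (α i) (β j) ≤ dist (α i) z + dist (β j) z := dist_triangle_right _ _ _
      _ < ε + r := add_lt_add (mem_ball'.mp hzi) hjz
      _ = r + ε := add_comm _ _
  calc A.card = (A : Set ι).ncard := (ncard_coe_finset A).symm
    _ ≤ {i | α i ∈ U}.ncard := ncard_le_ncard hA
    _ ≤ {j | β j ∈ thickening r U}.ncard := h U (isOpen_biUnion fun _ _ ↦ isOpen_ball)
    _ ≤ (A.biUnion near : Set κ).ncard := ncard_le_ncard hnear
    _ = (A.biUnion near).card := ncard_coe_finset _

theorem ncard_le_ncard_thickening_of_matchingDist_lt [Finite ι] {α β : ι → X} {r : ℝ}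
    (h : matchingDist α β < r) (U : Set X) :
    {i | α i ∈ U}.ncard ≤ {j | β j ∈ thickening r U}.ncard ∧
      {i | β i ∈ U}.ncard ≤ {j | α j ∈ thickening r U}.ncard := by
  obtain ⟨σ, hσ⟩ := exists_perm_forall_dist_lt_of_matchingDist_lt h
  refine ⟨ncard_le_ncard_thickening_of_injective σ.injective hσ U,
    ncard_le_ncard_thickening_of_injective σ.symm.injective (fun i ↦ ?_) U⟩
  simpa [dist_comm] using hσ (σ.symm i)

theorem matchingDist_le_of_ncard_le_ncard_thickening [Finite ι] {α β : ι → X} {r : ℝ}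
    (hr : 0 ≤ r)
    (h : ∀ U : Set X, IsOpen U → {i | α i ∈ U}.ncard ≤ {j | β j ∈ thickening r U}.ncard) :
    matchingDist α β ≤ r := by
  refine le_of_forall_pos_le_add fun ε hε ↦ ?_
  obtain ⟨f, hf, hfr⟩ := exists_injective_forall_dist_lt_of_ncard_le_ncard_thickening hε h
  exact matchingDist_le_of_forall_dist_le (by positivity)
    (Equiv.ofBijective f (Finite.injective_iff_bijective.mp hf)) fun i ↦ (hfr i).le

end MatchingDist

theorem optimal_matching_eq_infWasserstein_counting_general
    (n : ℕ) (α β : Fin n → ℂ) :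
    (⨅ σ : Equiv.Perm (Fin n), ⨆ i : Fin n, ‖α i - β (σ i)‖)
      = sInf { r : ℝ | 0 < r ∧ ∀ U : Set ℂ, IsOpen U →
          {i : Fin n | α i ∈ U}.ncard ≤ {j : Fin n | β j ∈ Metric.thickening r U}.ncard ∧
          {i : Fin n | β i ∈ U}.ncard ≤ {j : Fin n | α j ∈ Metric.thickening r U}.ncard } := by
  have hδ : (⨅ σ : Equiv.Perm (Fin n), ⨆ i : Fin n, ‖α i - β (σ i)‖) = matchingDist α β := by
    simp only [matchingDist, dist_eq_norm]
  rw [hδ]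
  exact (csInf_setOf_pos_and_eq (matchingDist_nonneg α β)
    (fun r hr U _ ↦ ncard_le_ncard_thickening_of_matchingDist_lt hr U)
    fun r hr hU ↦ matchingDist_le_of_ncard_le_ncard_thickening hr.le fun U hU' ↦ (hU U hU').1).symm

/-- The optimal matching distance between two lists `α, β` of `n` complex numbers
equals the ∞-Wasserstein distance between the associated counting measures:
`min_{σ ∈ Sₙ} max_i |α(i) − β(σ(i))|` equals the infimum of those `r > 0` such that,
for every open `U ⊆ ℂ`, the number of points of each list lying in `U` is at most the
number of points of the other list lying in the open `r`-neighbourhood `U_r`. -/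
theorem optimal_matching_eq_infWasserstein_counting
    (n : ℕ) (hn : 1 ≤ n) (α β : Fin n → ℂ) :
    (⨅ σ : Equiv.Perm (Fin n), ⨆ i : Fin n, ‖α i - β (σ i)‖)
      = sInf { r : ℝ | 0 < r ∧ ∀ U : Set ℂ, IsOpen U →
          {i : Fin n | α i ∈ U}.ncard ≤ {j : Fin n | β j ∈ Metric.thickening r U}.ncard ∧
          {i : Fin n | β i ∈ U}.ncard ≤ {j : Fin n | α j ∈ Metric.thickening r U}.ncard } :=
  optimal_matching_eq_infWasserstein_counting_general n α β
end
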